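/- arXiv:1807.05774 — 3 statements merged into one kernel-verified Lean document; each statement's English description precedes it below -/
import Mathlib

section
/- Let n ≥ 1 be an integer and α ∈ (0,1). Let u : ℝ^n → ℝ be a measurable function that is a weak solution of 𝓗_α u = h in ℝ^n for some constant h ∈ ℝ. Then h = 0. -/
open MeasureTheory Filter Metric Topology
open scoped ENNReal RealInnerProductSpace symmDiff

/-- The fractional interaction kernel `|x - y|^{-(N+α)}` (as an extended nonnegative real). -/
noncomputable def fracKer (N : ℕ) (α : ℝ) (x y : EuclideanSpace ℝ (Fin N)) : ℝ≥0∞ :=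
  ENNReal.ofReal (‖x - y‖ ^ (-((N : ℝ) + α)))

/-- The fractional `α`-perimeter of `E` in the open set `Ω`. -/
noncomputable def fracPer (N : ℕ) (α : ℝ) (E Ω : Set (EuclideanSpace ℝ (Fin N))) : ℝ≥0∞ :=
  (∫⁻ x in Ω ∩ E, ∫⁻ y in Eᶜ, fracKer N α x y) +
    (∫⁻ x in E \ Ω, ∫⁻ y in Ω \ E, fracKer N α x y)

/-- `E` is `α`-minimal in `Ω`. -/
def IsMinimalIn (N : ℕ) (α : ℝ) (E Ω : Set (EuclideanSpace ℝ (Fin N))) : Prop :=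
  MeasurableSet E ∧ fracPer N α E Ω < ⊤ ∧
    ∀ F : Set (EuclideanSpace ℝ (Fin N)), MeasurableSet F → F \ Ω = E \ Ω →
      fracPer N α E Ω ≤ fracPer N α F Ω

/-- `E` is `α`-minimal (in every bounded open set). -/
def IsMinimal (N : ℕ) (α : ℝ) (E : Set (EuclideanSpace ℝ (Fin N))) : Prop :=
  ∀ Ω : Set (EuclideanSpace ℝ (Fin N)), IsOpen Ω → Bornology.IsBounded Ω → IsMinimalIn N α E Ω

/-- A cone: closed under multiplication by positive scalars. -/
def IsCone {N : ℕ} (C : Set (EuclideanSpace ℝ (Fin N))) : Prop :=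
  ∀ x ∈ C, ∀ l : ℝ, 0 < l → l • x ∈ C

/-- A set is nontrivial if both it and its complement have positive Lebesgue measure. -/
def NontrivialSet {N : ℕ} (E : Set (EuclideanSpace ℝ (Fin N))) : Prop :=
  0 < volume E ∧ 0 < volume Eᶜ

/-- A half-space `{x : x·ν < c}`. -/
def IsHalfSpace {N : ℕ} (H : Set (EuclideanSpace ℝ (Fin N))) : Prop :=
  ∃ (ν : EuclideanSpace ℝ (Fin N)) (c : ℝ), ‖ν‖ = 1 ∧ H = {x | ⟪x, ν⟫ < c}

/-- A half-space through the origin. -/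
def IsHalfSpace0 {N : ℕ} (H : Set (EuclideanSpace ℝ (Fin N))) : Prop :=
  ∃ ν : EuclideanSpace ℝ (Fin N), ‖ν‖ = 1 ∧ H = {x | ⟪x, ν⟫ < 0}

/-- The function `G(t) = ∫₀ᵗ (1+τ²)^{-(n+1+α)/2} dτ`. -/
noncomputable def Gker (n : ℕ) (α t : ℝ) : ℝ :=
  ∫ τ in (0 : ℝ)..t, (1 + τ ^ 2) ^ (-((n : ℝ) + 1 + α) / 2)

/-- `u` is a (smooth, pointwise) solution of `𝓗_α u = 0` in `ℝⁿ`: `u` is `C^∞` and the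
principal value defining `𝓗_α u (x)` exists and vanishes at every point. -/
def IsNMGraphSol (n : ℕ) (α : ℝ) (u : EuclideanSpace ℝ (Fin n) → ℝ) : Prop :=
  ContDiff ℝ (⊤ : ℕ∞) u ∧
    ∀ x : EuclideanSpace ℝ (Fin n),
      Tendsto (fun ε : ℝ =>
          ∫ y in {y : EuclideanSpace ℝ (Fin n) | ε < ‖y - x‖},
            Gker n α ((u x - u y) / ‖x - y‖) * ‖x - y‖ ^ (-((n : ℝ) + α)))
        (𝓝[>] (0 : ℝ)) (𝓝 0)

/-- `u` is an affine function. -/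
def IsAffineFun {n : ℕ} (u : EuclideanSpace ℝ (Fin n) → ℝ) : Prop :=
  ∃ (a : EuclideanSpace ℝ (Fin n)) (b : ℝ), ∀ x, u x = ⟪a, x⟫ + b

/-- The partial derivative `∂u/∂xᵢ` is bounded from above or from below on `ℝⁿ`. -/
def PartialBddOneSide {n : ℕ} (u : EuclideanSpace ℝ (Fin n) → ℝ) (i : Fin n) : Prop :=
  (∃ M : ℝ, ∀ x, fderiv ℝ u x (EuclideanSpace.single i 1) ≤ M) ∨
    (∃ m : ℝ, ∀ x, m ≤ fderiv ℝ u x (EuclideanSpace.single i 1))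

/-- The subgraph `{(x', x_{n+1}) : x_{n+1} < u x'} ⊆ ℝ^{n+1}` of `u : ℝⁿ → ℝ`. -/
def subgraph (n : ℕ) (u : EuclideanSpace ℝ (Fin n) → ℝ) :
    Set (EuclideanSpace ℝ (Fin (n + 1))) :=
  {x | x (Fin.last n) < u (WithLp.toLp 2 (fun i : Fin n => x i.castSucc))}

/-- The dilation `E_r = {x : r x ∈ E}`. -/
def scaled {N : ℕ} (E : Set (EuclideanSpace ℝ (Fin N))) (r : ℝ) :
    Set (EuclideanSpace ℝ (Fin N)) :=
  {x | r • x ∈ E}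

/-- `A j → B` in `L¹_loc(ℝᴺ)`: the measure of `(A j ∆ B) ∩ B_R` tends to `0` for every `R`. -/
def L1locConv {N : ℕ} (A : ℕ → Set (EuclideanSpace ℝ (Fin N)))
    (B : Set (EuclideanSpace ℝ (Fin N))) : Prop :=
  ∀ R : ℝ, 0 < R →
    Tendsto (fun j => volume ((A j ∆ B) ∩ ball (0 : EuclideanSpace ℝ (Fin N)) R))
      atTop (𝓝 0)

/-- `C` is a blow-down limit of `E`: `E_{r_j} → C` in `L¹_loc` along some sequence `r_j → +∞`. -/
def IsBlowDown {N : ℕ} (E C : Set (EuclideanSpace ℝ (Fin N))) : Prop :=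
  ∃ r : ℕ → ℝ, (∀ j, 0 < r j) ∧ Tendsto r atTop atTop ∧
    L1locConv (fun j => scaled E (r j)) C

/-- `v ∈ W^{α,1}(ℝⁿ)`: `v` is integrable with finite Gagliardo seminorm. -/
def MemWa1 (n : ℕ) (α : ℝ) (v : EuclideanSpace ℝ (Fin n) → ℝ) : Prop :=
  Integrable v ∧
    (∫⁻ x, ∫⁻ y, ENNReal.ofReal (|v x - v y| * ‖x - y‖ ^ (-((n : ℝ) + α)))) < ⊤

/-- The pairing `⟨𝓗_α u, v⟩`. -/
noncomputable def fracPairing (n : ℕ) (α : ℝ) (u v : EuclideanSpace ℝ (Fin n) → ℝ) : ℝ :=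
  ∫ x, ∫ y, Gker n α ((u x - u y) / ‖x - y‖) * (v x - v y) * ‖x - y‖ ^ (-((n : ℝ) + α))

/-- `u` is a weak solution of `𝓗_α u = h` in `ℝⁿ`. -/
def IsWeakSol (n : ℕ) (α : ℝ) (u : EuclideanSpace ℝ (Fin n) → ℝ) (h : ℝ) : Prop :=
  Measurable u ∧
    ∀ v : EuclideanSpace ℝ (Fin n) → ℝ, MemWa1 n α v →
      fracPairing n α u v = h * ∫ x, v x

section CMCProofAux

open MeasureTheory Real Set Metric Filter

namespace CMCProofAux

lemma gkerIntegrand_cont (n : ℕ) (α : ℝ) :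
    Continuous fun τ : ℝ => (1 + τ ^ 2) ^ (-((n : ℝ) + 1 + α) / 2) := by
  refine Continuous.rpow_const (by continuity) fun τ => Or.inl ?_
  positivity

lemma gker_cont (n : ℕ) (α : ℝ) : Continuous (Gker n α) := by
  unfold Gker
  exact intervalIntegral.continuous_primitive
    (fun a b => (gkerIntegrand_cont n α).intervalIntegrable a b) 0

lemma gkerIntegrand_le (n : ℕ) (hn : 1 ≤ n) {α : ℝ} (hα : 0 < α) (τ : ℝ) :
    (1 + τ ^ 2) ^ (-((n : ℝ) + 1 + α) / 2) ≤ (1 + τ ^ 2)⁻¹ := by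
  have h1 : (1 : ℝ) ≤ 1 + τ ^ 2 := by nlinarith [sq_nonneg τ]
  have hcast : (1 : ℝ) ≤ (n : ℝ) := by exact_mod_cast hn
  have h2 : -((n : ℝ) + 1 + α) / 2 ≤ -1 := by linarith
  calc (1 + τ ^ 2) ^ (-((n : ℝ) + 1 + α) / 2) ≤ (1 + τ ^ 2) ^ (-1 : ℝ) :=
        rpow_le_rpow_of_exponent_le h1 h2
    _ = (1 + τ ^ 2)⁻¹ := by rw [rpow_neg_one]

lemma gkerIntegrand_integrable (n : ℕ) (hn : 1 ≤ n) {α : ℝ} (hα : 0 < α) :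
    Integrable fun τ : ℝ => (1 + τ ^ 2) ^ (-((n : ℝ) + 1 + α) / 2) := by
  refine integrable_inv_one_add_sq.mono' (gkerIntegrand_cont n α).aestronglyMeasurable
    (Filter.Eventually.of_forall fun τ => ?_)
  rw [Real.norm_eq_abs, abs_of_nonneg (by positivity)]
  exact gkerIntegrand_le n hn hα τ

lemma abs_gker_le (n : ℕ) (hn : 1 ≤ n) {α : ℝ} (hα : 0 < α) (t : ℝ) :
    |Gker n α t| ≤ π := by
  set f : ℝ → ℝ := fun τ => (1 + τ ^ 2) ^ (-((n : ℝ) + 1 + α) / 2) with hf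
  have hfi : Integrable f := gkerIntegrand_integrable n hn hα
  have hfnn : 0 ≤ᵐ[(volume : Measure ℝ)] f :=
    Filter.Eventually.of_forall fun τ => by positivity
  have hbig : ∫ τ, f τ ≤ π := by
    rw [← integral_univ_inv_one_add_sq]
    exact integral_mono hfi integrable_inv_one_add_sq fun τ => gkerIntegrand_le n hn hα τ
  have hG : Gker n α t = ∫ τ in (0:ℝ)..t, f τ := rfl
  rcases le_total 0 t with ht | ht
  · rw [hG, intervalIntegral.integral_of_le ht]
    rw [abs_of_nonneg (setIntegral_nonneg measurableSet_Ioc fun τ _ => by positivity)]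
    exact le_trans (setIntegral_le_integral hfi hfnn) hbig
  · rw [hG, intervalIntegral.integral_of_ge ht, abs_neg]
    rw [abs_of_nonneg (setIntegral_nonneg measurableSet_Ioc fun τ _ => by positivity)]
    exact le_trans (setIntegral_le_integral hfi hfnn) hbig

/-- The Gagliardo double integral, matching the one in `MemWa1`. -/
noncomputable def Sem (n : ℕ) (α : ℝ) (v : EuclideanSpace ℝ (Fin n) → ℝ) : ℝ≥0∞ :=
  ∫⁻ x, ∫⁻ y, ENNReal.ofReal (|v x - v y| * ‖x - y‖ ^ (-((n : ℝ) + α)))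

set_option maxHeartbeats 1000000 in
lemma pairing_abs_le {n : ℕ} (hn : 1 ≤ n) {α : ℝ} (hα : 0 < α)
    {u v : EuclideanSpace ℝ (Fin n) → ℝ} (hu : Measurable u) (hv : Measurable v)
    (hS : Sem n α v ≠ ⊤) :
    |fracPairing n α u v| ≤ π * (Sem n α v).toReal := by
  set q : ℝ := -((n : ℝ) + α) with hq
  set f : EuclideanSpace ℝ (Fin n) → EuclideanSpace ℝ (Fin n) → ℝ :=
    fun x y => Gker n α ((u x - u y) / ‖x - y‖) * (v x - v y) * ‖x - y‖ ^ q with hfdef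
  have hfm : StronglyMeasurable (Function.uncurry f) := by
    apply Measurable.stronglyMeasurable
    have h1 : Measurable fun p : EuclideanSpace ℝ (Fin n) × EuclideanSpace ℝ (Fin n) =>
        Gker n α ((u p.1 - u p.2) / ‖p.1 - p.2‖) :=
      (gker_cont n α).measurable.comp
        (((hu.comp measurable_fst).sub (hu.comp measurable_snd)).div
          (measurable_fst.sub measurable_snd).norm)
    have h2 : Measurable fun p : EuclideanSpace ℝ (Fin n) × EuclideanSpace ℝ (Fin n) =>
        v p.1 - v p.2 := (hv.comp measurable_fst).sub (hv.comp measurable_snd)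
    have h3 : Measurable fun p : EuclideanSpace ℝ (Fin n) × EuclideanSpace ℝ (Fin n) =>
        ‖p.1 - p.2‖ ^ q := by fun_prop
    exact (h1.mul h2).mul h3
  have hfxm : ∀ x, Measurable fun y => f x y := by
    intro x
    rw [hfdef]
    have h1 : Measurable fun y : EuclideanSpace ℝ (Fin n) =>
        Gker n α ((u x - u y) / ‖x - y‖) :=
      (gker_cont n α).measurable.comp
        ((measurable_const.sub hu).div (measurable_const.sub measurable_id).norm)
    have h2 : Measurable fun y : EuclideanSpace ℝ (Fin n) => v x - v y :=
      measurable_const.sub hv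
    have h3 : Measurable fun y : EuclideanSpace ℝ (Fin n) => ‖x - y‖ ^ q := by fun_prop
    exact (h1.mul h2).mul h3
  have key : ∀ x y, |f x y| ≤ π * (|v x - v y| * ‖x - y‖ ^ q) := by
    intro x y
    have h1 : (0:ℝ) ≤ ‖x - y‖ ^ q := Real.rpow_nonneg (norm_nonneg _) _
    calc |f x y| = |Gker n α ((u x - u y) / ‖x - y‖)| * |v x - v y| * ‖x - y‖ ^ q := by
          rw [hfdef]
          rw [abs_mul, abs_mul, abs_of_nonneg h1]
      _ ≤ π * |v x - v y| * ‖x - y‖ ^ q := by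
          gcongr
          exact abs_gker_le n hn hα _
      _ = π * (|v x - v y| * ‖x - y‖ ^ q) := by ring
  have hA : (∫⁻ x, ∫⁻ y, ENNReal.ofReal |f x y|) ≤ ENNReal.ofReal π * Sem n α v := by
    have hx : ∀ x, (∫⁻ y, ENNReal.ofReal |f x y|) ≤
        ENNReal.ofReal π * ∫⁻ y, ENNReal.ofReal (|v x - v y| * ‖x - y‖ ^ q) := by
      intro x
      rw [← lintegral_const_mul' _ _ ENNReal.ofReal_ne_top]
      refine lintegral_mono fun y => ?_
      rw [← ENNReal.ofReal_mul Real.pi_pos.le]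
      exact ENNReal.ofReal_le_ofReal (key x y)
    calc (∫⁻ x, ∫⁻ y, ENNReal.ofReal |f x y|) ≤
        ∫⁻ x, ENNReal.ofReal π * ∫⁻ y, ENNReal.ofReal (|v x - v y| * ‖x - y‖ ^ q) :=
          lintegral_mono hx
      _ = ENNReal.ofReal π * Sem n α v := lintegral_const_mul' _ _ ENNReal.ofReal_ne_top
  have hfin : ENNReal.ofReal π * Sem n α v ≠ ⊤ :=
    ENNReal.mul_ne_top ENNReal.ofReal_ne_top hS
  have hAne : (∫⁻ x, ∫⁻ y, ENNReal.ofReal |f x y|) ≠ ⊤ :=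
    (lt_of_le_of_lt hA hfin.lt_top).ne
  have hinner : ∀ x, |∫ y, f x y| ≤ (∫⁻ y, ENNReal.ofReal |f x y|).toReal := by
    intro x
    have h1 : |∫ y, f x y| ≤ ∫ y, |f x y| := by
      simpa [Real.norm_eq_abs] using norm_integral_le_integral_norm (f x)
    have h2 : ∫ y, |f x y| = (∫⁻ y, ENNReal.ofReal |f x y|).toReal :=
      integral_eq_lintegral_of_nonneg_ae (Filter.Eventually.of_forall fun y => abs_nonneg _)
        (hfxm x).abs.aestronglyMeasurable
    linarith
  have houter : StronglyMeasurable fun x => ∫ y, f x y := hfm.integral_prod_right'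
  have hP : fracPairing n α u v = ∫ x, ∫ y, f x y := rfl
  rw [hP]
  have h3 : |∫ x, ∫ y, f x y| ≤ ∫ x, |∫ y, f x y| := by
    simpa [Real.norm_eq_abs] using norm_integral_le_integral_norm fun x => ∫ y, f x y
  have h4 : ∫ x, |∫ y, f x y| = (∫⁻ x, ENNReal.ofReal |∫ y, f x y|).toReal :=
    integral_eq_lintegral_of_nonneg_ae (Filter.Eventually.of_forall fun x => abs_nonneg _)
      houter.measurable.abs.aestronglyMeasurable
  have h5 : (∫⁻ x, ENNReal.ofReal |∫ y, f x y|) ≤ ∫⁻ x, ∫⁻ y, ENNReal.ofReal |f x y| :=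
    lintegral_mono fun x =>
      le_trans (ENNReal.ofReal_le_ofReal (hinner x)) ENNReal.ofReal_toReal_le
  have h6 : (∫⁻ x, ENNReal.ofReal |∫ y, f x y|).toReal ≤
      (∫⁻ x, ∫⁻ y, ENNReal.ofReal |f x y|).toReal := ENNReal.toReal_mono hAne h5
  have h7 : (∫⁻ x, ∫⁻ y, ENNReal.ofReal |f x y|).toReal ≤
      (ENNReal.ofReal π * Sem n α v).toReal := ENNReal.toReal_mono hfin hA
  have h8 : (ENNReal.ofReal π * Sem n α v).toReal = π * (Sem n α v).toReal := by
    rw [ENNReal.toReal_mul, ENNReal.toReal_ofReal Real.pi_pos.le]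
  calc |∫ x, ∫ y, f x y| ≤ ∫ x, |∫ y, f x y| := h3
    _ = (∫⁻ x, ENNReal.ofReal |∫ y, f x y|).toReal := h4
    _ ≤ (∫⁻ x, ∫⁻ y, ENNReal.ofReal |f x y|).toReal := h6
    _ ≤ (ENNReal.ofReal π * Sem n α v).toReal := h7
    _ = π * (Sem n α v).toReal := h8

/-! ### The test function -/

/-- The tent function `φ(x) = max (1 - ‖x‖) 0`. -/
noncomputable def phi (n : ℕ) : EuclideanSpace ℝ (Fin n) → ℝ := fun x => max (1 - ‖x‖) 0

lemma phi_cont (n : ℕ) : Continuous (phi n) :=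
  (continuous_const.sub continuous_norm).max continuous_const

lemma phi_nonneg (n : ℕ) (x : EuclideanSpace ℝ (Fin n)) : 0 ≤ phi n x := le_max_right _ _

lemma phi_lip (n : ℕ) (x y : EuclideanSpace ℝ (Fin n)) : |phi n x - phi n y| ≤ ‖x - y‖ := by
  have h1 : |phi n x - phi n y| ≤ max |1 - ‖x‖ - (1 - ‖y‖)| |(0:ℝ) - 0| :=
    abs_max_sub_max_le_max _ _ _ _
  have h2 : |1 - ‖x‖ - (1 - ‖y‖)| = |‖x‖ - ‖y‖| := by
    rw [abs_sub_comm]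
    ring_nf
  have h3 : |‖x‖ - ‖y‖| ≤ ‖x - y‖ := abs_norm_sub_norm_le x y
  have h4 : |(0:ℝ) - 0| = 0 := by simp
  calc |phi n x - phi n y| ≤ max |1 - ‖x‖ - (1 - ‖y‖)| |(0:ℝ) - 0| := h1
    _ ≤ ‖x - y‖ := by
        rw [h2, h4]
        exact max_le h3 (norm_nonneg _)

lemma phi_eq_zero (n : ℕ) {x : EuclideanSpace ℝ (Fin n)} (hx : 1 ≤ ‖x‖) : phi n x = 0 :=
  max_eq_right (by linarith)

lemma phi_integrable (n : ℕ) : Integrable (phi n) := by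
  refine (phi_cont n).integrable_of_hasCompactSupport ?_
  refine HasCompactSupport.intro (isCompact_closedBall (0 : EuclideanSpace ℝ (Fin n)) 1)
    fun x hx => ?_
  refine phi_eq_zero n ?_
  rw [mem_closedBall_zero_iff] at hx
  linarith [not_le.mp hx]

lemma phi_integral_pos (n : ℕ) : 0 < ∫ x, phi n x := by
  rw [integral_pos_iff_support_of_nonneg (phi_nonneg n) (phi_integrable n)]
  refine lt_of_lt_of_le (measure_ball_pos volume (0 : EuclideanSpace ℝ (Fin n)) one_pos)
    (measure_mono fun x hx => ?_)
  rw [mem_ball_zero_iff] at hx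
  have hlt : (0:ℝ) < phi n x := lt_of_lt_of_le (by linarith) (le_max_left _ _)
  exact Function.mem_support.2 hlt.ne'

/-! ### Finiteness of the kernel integrals -/

lemma restrict_apply_le' {n : ℕ} (B A : Set (EuclideanSpace ℝ (Fin n))) :
    (volume.restrict B) A ≤ volume A :=
  Measure.restrict_apply_le B A

lemma lint_ball_rpow_lt_top (n : ℕ) {s : ℝ} (hs : 0 < s) (hsn : s < n) :
    ∫⁻ z in ball (0 : EuclideanSpace ℝ (Fin n)) 1, ENNReal.ofReal (‖z‖ ^ (-s)) < ⊤ := by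
  have hmeas : AEMeasurable (fun z : EuclideanSpace ℝ (Fin n) => ‖z‖ ^ (-s))
      (volume.restrict (ball 0 1)) := by fun_prop
  rw [lintegral_eq_lintegral_meas_le _
    (Filter.Eventually.of_forall fun z => Real.rpow_nonneg (norm_nonneg _) _) hmeas]
  have hsub : ∀ t : ℝ, 0 < t →
      {a : EuclideanSpace ℝ (Fin n) | t ≤ ‖a‖ ^ (-s)} ⊆ closedBall 0 (t ^ (-s)⁻¹) := by
    intro t ht a ha
    rw [mem_closedBall_zero_iff]
    rcases eq_or_ne a 0 with rfl | h0
    · simpa using Real.rpow_nonneg ht.le _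
    · exact (Real.le_rpow_inv_iff_of_neg (norm_pos_iff.2 h0) ht (neg_lt_zero.2 hs)).2 ha
  have hone : (∫⁻ t in Ioc (0:ℝ) 1,
      (volume.restrict (ball (0 : EuclideanSpace ℝ (Fin n)) 1)) {a | t ≤ ‖a‖ ^ (-s)}) < ⊤ := by
    calc (∫⁻ t in Ioc (0:ℝ) 1,
        (volume.restrict (ball (0 : EuclideanSpace ℝ (Fin n)) 1)) {a | t ≤ ‖a‖ ^ (-s)})
        ≤ ∫⁻ _ in Ioc (0:ℝ) 1, volume (ball (0 : EuclideanSpace ℝ (Fin n)) 1) :=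
          lintegral_mono fun t =>
            (measure_mono (Set.subset_univ _)).trans_eq (Measure.restrict_apply_univ _)
      _ = volume (ball (0 : EuclideanSpace ℝ (Fin n)) 1) * volume (Ioc (0:ℝ) 1) :=
          setLIntegral_const _ _
      _ < ⊤ := by
          apply ENNReal.mul_lt_top measure_ball_lt_top
          rw [Real.volume_Ioc]
          exact ENNReal.ofReal_lt_top
  have htwo : (∫⁻ t in Ioi (1:ℝ),
      (volume.restrict (ball (0 : EuclideanSpace ℝ (Fin n)) 1)) {a | t ≤ ‖a‖ ^ (-s)}) < ⊤ := by
    have hb : ∀ t ∈ Ioi (1:ℝ),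
        (volume.restrict (ball (0 : EuclideanSpace ℝ (Fin n)) 1)) {a | t ≤ ‖a‖ ^ (-s)} ≤
        ENNReal.ofReal (t ^ (-((n:ℝ)/s))) *
          volume (ball (0 : EuclideanSpace ℝ (Fin n)) 1) := by
      intro t ht
      have ht0 : (0:ℝ) < t := lt_trans one_pos ht
      calc (volume.restrict (ball (0 : EuclideanSpace ℝ (Fin n)) 1)) {a | t ≤ ‖a‖ ^ (-s)}
          ≤ volume {a : EuclideanSpace ℝ (Fin n) | t ≤ ‖a‖ ^ (-s)} := restrict_apply_le' _ _
        _ ≤ volume (closedBall (0 : EuclideanSpace ℝ (Fin n)) (t ^ (-s)⁻¹)) :=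
            measure_mono (hsub t ht0)
        _ = ENNReal.ofReal ((t ^ (-s)⁻¹) ^ Module.finrank ℝ (EuclideanSpace ℝ (Fin n))) *
            volume (ball (0 : EuclideanSpace ℝ (Fin n)) 1) :=
            Measure.addHaar_closedBall _ _ (Real.rpow_nonneg ht0.le _)
        _ = ENNReal.ofReal (t ^ (-((n:ℝ)/s))) *
            volume (ball (0 : EuclideanSpace ℝ (Fin n)) 1) := by
            congr 2
            rw [finrank_euclideanSpace_fin, ← Real.rpow_natCast (t ^ (-s)⁻¹) n,
              ← Real.rpow_mul ht0.le]
            congr 1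
            field_simp
    calc (∫⁻ t in Ioi (1:ℝ),
        (volume.restrict (ball (0 : EuclideanSpace ℝ (Fin n)) 1)) {a | t ≤ ‖a‖ ^ (-s)})
        ≤ ∫⁻ t in Ioi (1:ℝ), ENNReal.ofReal (t ^ (-((n:ℝ)/s))) *
            volume (ball (0 : EuclideanSpace ℝ (Fin n)) 1) :=
          setLIntegral_mono (by fun_prop) hb
      _ = (∫⁻ t in Ioi (1:ℝ), ENNReal.ofReal (t ^ (-((n:ℝ)/s)))) *
            volume (ball (0 : EuclideanSpace ℝ (Fin n)) 1) :=
          lintegral_mul_const' _ _ measure_ball_lt_top.ne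
      _ < ⊤ := by
          refine ENNReal.mul_lt_top ?_ measure_ball_lt_top
          have hint : IntegrableOn (fun t : ℝ => t ^ (-((n:ℝ)/s))) (Ioi 1) volume := by
            refine integrableOn_Ioi_rpow_of_lt ?_ one_pos
            rw [neg_lt_neg_iff, lt_div_iff₀ hs]
            linarith
          exact hint.lintegral_lt_top
  calc ∫⁻ t in Ioi (0:ℝ),
        (volume.restrict (ball (0 : EuclideanSpace ℝ (Fin n)) 1)) {a | t ≤ ‖a‖ ^ (-s)}
      ≤ ∫⁻ t in Ioc (0:ℝ) 1 ∪ Ioi 1,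
        (volume.restrict (ball (0 : EuclideanSpace ℝ (Fin n)) 1)) {a | t ≤ ‖a‖ ^ (-s)} :=
        lintegral_mono_set Ioi_subset_Ioc_union_Ioi
    _ ≤ (∫⁻ t in Ioc (0:ℝ) 1,
          (volume.restrict (ball (0 : EuclideanSpace ℝ (Fin n)) 1)) {a | t ≤ ‖a‖ ^ (-s)}) +
        ∫⁻ t in Ioi (1:ℝ),
          (volume.restrict (ball (0 : EuclideanSpace ℝ (Fin n)) 1)) {a | t ≤ ‖a‖ ^ (-s)} :=
        lintegral_union_le _ _ _
    _ < ⊤ := ENNReal.add_lt_top.2 ⟨hone, htwo⟩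

lemma lint_compl_ball_rpow_lt_top (n : ℕ) {p : ℝ} (hp : (n:ℝ) < p) :
    ∫⁻ z in (ball (0 : EuclideanSpace ℝ (Fin n)) 1)ᶜ, ENNReal.ofReal (‖z‖ ^ (-p)) < ⊤ := by
  have hp0 : 0 < p := lt_of_le_of_lt (Nat.cast_nonneg n) hp
  have key : ∀ z ∈ (ball (0 : EuclideanSpace ℝ (Fin n)) 1)ᶜ,
      ENNReal.ofReal (‖z‖ ^ (-p)) ≤ ENNReal.ofReal ((2:ℝ) ^ p * (1 + ‖z‖) ^ (-p)) := by
    intro z hz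
    have h1 : (1:ℝ) ≤ ‖z‖ := by
      have h := hz
      simp only [mem_compl_iff, mem_ball_zero_iff, not_lt] at h
      exact h
    have hzpos : (0:ℝ) < ‖z‖ := lt_of_lt_of_le one_pos h1
    apply ENNReal.ofReal_le_ofReal
    have h2 : (1 + ‖z‖) ≤ 2 * ‖z‖ := by linarith
    have h3 : (2 * ‖z‖) ^ (-p) ≤ (1 + ‖z‖) ^ (-p) :=
      (Real.rpow_le_rpow_iff_of_neg (by positivity) (by positivity) (neg_lt_zero.2 hp0)).2 h2
    rw [Real.mul_rpow (by norm_num) (norm_nonneg _)] at h3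
    have h4 : ‖z‖ ^ (-p) = (2:ℝ) ^ p * ((2:ℝ) ^ (-p) * ‖z‖ ^ (-p)) := by
      rw [← mul_assoc, ← Real.rpow_add two_pos, add_neg_cancel, Real.rpow_zero, one_mul]
    rw [h4]
    exact mul_le_mul_of_nonneg_left h3 (Real.rpow_nonneg (by norm_num) _)
  calc ∫⁻ z in (ball (0 : EuclideanSpace ℝ (Fin n)) 1)ᶜ, ENNReal.ofReal (‖z‖ ^ (-p))
      ≤ ∫⁻ z in (ball (0 : EuclideanSpace ℝ (Fin n)) 1)ᶜ,
          ENNReal.ofReal ((2:ℝ) ^ p * (1 + ‖z‖) ^ (-p)) := setLIntegral_mono (by fun_prop) key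
    _ ≤ ∫⁻ z, ENNReal.ofReal ((2:ℝ) ^ p * (1 + ‖z‖) ^ (-p)) := setLIntegral_le_lintegral _ _
    _ = ENNReal.ofReal ((2:ℝ) ^ p) * ∫⁻ z, ENNReal.ofReal ((1 + ‖z‖) ^ (-p)) := by
        simp_rw [ENNReal.ofReal_mul (Real.rpow_nonneg (by norm_num : (0:ℝ) ≤ 2) p)]
        exact lintegral_const_mul' _ _ ENNReal.ofReal_ne_top
    _ < ⊤ := by
        refine ENNReal.mul_lt_top ENNReal.ofReal_lt_top ?_
        refine finite_integral_one_add_norm ?_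
        rw [finrank_euclideanSpace_fin]
        exact hp

/-! ### Finiteness of the Gagliardo seminorm of `phi` -/

lemma sem_phi_lt_top (n : ℕ) (hn : 1 ≤ n) {α : ℝ} (hα0 : 0 < α) (hα1 : α < 1) :
    Sem n α (phi n) < ⊤ := by
  have hφm : Measurable (phi n) := (phi_cont n).measurable
  have hn1 : (1:ℝ) ≤ (n:ℝ) := by exact_mod_cast hn
  have hLfin : (∫⁻ x, ENNReal.ofReal (phi n x)) < ⊤ := (phi_integrable n).lintegral_lt_top
  have step1 : Sem n α (phi n) =
      ∫⁻ z, ENNReal.ofReal (‖z‖ ^ (-((n:ℝ)+α))) *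
        ∫⁻ x, ENNReal.ofReal |phi n x - phi n (x + z)| := by
    have e1 : ∀ x : EuclideanSpace ℝ (Fin n),
        (∫⁻ y, ENNReal.ofReal (|phi n x - phi n y| * ‖x - y‖ ^ (-((n:ℝ)+α)))) =
        ∫⁻ z, ENNReal.ofReal (|phi n x - phi n (x + z)| * ‖z‖ ^ (-((n:ℝ)+α))) := by
      intro x
      calc (∫⁻ y, ENNReal.ofReal (|phi n x - phi n y| * ‖x - y‖ ^ (-((n:ℝ)+α))))
          = ∫⁻ z, ENNReal.ofReal (|phi n x - phi n (x + z)| * ‖x - (x + z)‖ ^ (-((n:ℝ)+α))) :=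
            (lintegral_add_left_eq_self
              (fun y => ENNReal.ofReal (|phi n x - phi n y| * ‖x - y‖ ^ (-((n:ℝ)+α)))) x).symm
        _ = ∫⁻ z, ENNReal.ofReal (|phi n x - phi n (x + z)| * ‖z‖ ^ (-((n:ℝ)+α))) := by
            refine lintegral_congr fun z => ?_
            have hxz : x - (x + z) = -z := by abel
            rw [hxz, norm_neg]
    have hmeas : Measurable fun w : EuclideanSpace ℝ (Fin n) × EuclideanSpace ℝ (Fin n) =>
        ENNReal.ofReal (|phi n w.1 - phi n (w.1 + w.2)| * ‖w.2‖ ^ (-((n:ℝ)+α))) := by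
      apply Measurable.ennreal_ofReal
      apply Measurable.mul
      · exact ((hφm.comp measurable_fst).sub (hφm.comp (measurable_fst.add measurable_snd))).abs
      · fun_prop
    calc Sem n α (phi n)
        = ∫⁻ x, ∫⁻ z, ENNReal.ofReal (|phi n x - phi n (x + z)| * ‖z‖ ^ (-((n:ℝ)+α))) :=
          lintegral_congr e1
      _ = ∫⁻ z, ∫⁻ x, ENNReal.ofReal (|phi n x - phi n (x + z)| * ‖z‖ ^ (-((n:ℝ)+α))) :=
          lintegral_lintegral_swap (f := fun x z =>
            ENNReal.ofReal (|phi n x - phi n (x + z)| * ‖z‖ ^ (-((n:ℝ)+α))))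
            hmeas.aemeasurable
      _ = ∫⁻ z, ENNReal.ofReal (‖z‖ ^ (-((n:ℝ)+α))) *
            ∫⁻ x, ENNReal.ofReal |phi n x - phi n (x + z)| := by
          refine lintegral_congr fun z => ?_
          rw [← lintegral_const_mul' _ _ ENNReal.ofReal_ne_top]
          refine lintegral_congr fun x => ?_
          rw [← ENNReal.ofReal_mul (Real.rpow_nonneg (norm_nonneg _) _)]
          rw [mul_comm]
  rw [step1]
  have hIba : ∀ z : EuclideanSpace ℝ (Fin n), ‖z‖ ≤ 1 →
      (∫⁻ x, ENNReal.ofReal |phi n x - phi n (x + z)|) ≤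
        ENNReal.ofReal ‖z‖ * volume (ball (0 : EuclideanSpace ℝ (Fin n)) 2) := by
    intro z hz
    have hpt : ∀ x : EuclideanSpace ℝ (Fin n),
        ENNReal.ofReal |phi n x - phi n (x + z)| ≤
        (ball (0 : EuclideanSpace ℝ (Fin n)) 2).indicator
          (fun _ => ENNReal.ofReal ‖z‖) x := by
      intro x
      by_cases hx : x ∈ ball (0 : EuclideanSpace ℝ (Fin n)) 2
      · rw [Set.indicator_of_mem hx]
        refine ENNReal.ofReal_le_ofReal ?_
        have hl := phi_lip n x (x + z)
        have hxz : x - (x + z) = -z := by abel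
        rwa [hxz, norm_neg] at hl
      · rw [Set.indicator_of_notMem hx]
        rw [mem_ball_zero_iff, not_lt] at hx
        have hxx : ‖x‖ ≤ ‖x + z‖ + ‖z‖ := by
          have h := norm_add_le (x + z) (-z)
          simpa using h
        have h1 : phi n x = 0 := phi_eq_zero n (by linarith)
        have h2 : phi n (x + z) = 0 := phi_eq_zero n (by linarith)
        simp [h1, h2]
    calc (∫⁻ x, ENNReal.ofReal |phi n x - phi n (x + z)|) ≤
        ∫⁻ x, (ball (0 : EuclideanSpace ℝ (Fin n)) 2).indicator
          (fun _ => ENNReal.ofReal ‖z‖) x := lintegral_mono hpt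
      _ = ENNReal.ofReal ‖z‖ * volume (ball (0 : EuclideanSpace ℝ (Fin n)) 2) := by
          rw [lintegral_indicator measurableSet_ball, setLIntegral_const]
  have hIbb : ∀ z : EuclideanSpace ℝ (Fin n),
      (∫⁻ x, ENNReal.ofReal |phi n x - phi n (x + z)|) ≤
        2 * ∫⁻ x, ENNReal.ofReal (phi n x) := by
    intro z
    have hpt : ∀ x : EuclideanSpace ℝ (Fin n),
        ENNReal.ofReal |phi n x - phi n (x + z)| ≤
        ENNReal.ofReal (phi n x) + ENNReal.ofReal (phi n (x + z)) := by
      intro x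
      rw [← ENNReal.ofReal_add (phi_nonneg n x) (phi_nonneg n (x + z))]
      refine ENNReal.ofReal_le_ofReal ?_
      have h1 := phi_nonneg n x
      have h2 := phi_nonneg n (x + z)
      rw [abs_le]
      constructor <;> linarith
    calc (∫⁻ x, ENNReal.ofReal |phi n x - phi n (x + z)|) ≤
        ∫⁻ x, (ENNReal.ofReal (phi n x) + ENNReal.ofReal (phi n (x + z))) :=
          lintegral_mono hpt
      _ = (∫⁻ x, ENNReal.ofReal (phi n x)) + ∫⁻ x, ENNReal.ofReal (phi n (x + z)) :=
          lintegral_add_left (by fun_prop) _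
      _ = (∫⁻ x, ENNReal.ofReal (phi n x)) + ∫⁻ x, ENNReal.ofReal (phi n x) := by
          rw [lintegral_add_right_eq_self (fun x => ENNReal.ofReal (phi n x)) z]
      _ = 2 * ∫⁻ x, ENNReal.ofReal (phi n x) := by ring
  rw [← lintegral_add_compl (fun z => ENNReal.ofReal (‖z‖ ^ (-((n:ℝ)+α))) *
      ∫⁻ x, ENNReal.ofReal |phi n x - phi n (x + z)|)
      (measurableSet_ball : MeasurableSet (ball (0 : EuclideanSpace ℝ (Fin n)) 1))]
  refine ENNReal.add_lt_top.2 ⟨?_, ?_⟩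
  · -- near part
    have hzz : ∀ z : EuclideanSpace ℝ (Fin n),
        ENNReal.ofReal (‖z‖ ^ (-((n:ℝ)+α))) * ENNReal.ofReal ‖z‖ =
        ENNReal.ofReal (‖z‖ ^ (-((n:ℝ)+α-1))) := by
      intro z
      rw [← ENNReal.ofReal_mul (Real.rpow_nonneg (norm_nonneg _) _)]
      congr 1
      have he : -((n:ℝ)+α-1) = -((n:ℝ)+α) + 1 := by ring
      rw [he, Real.rpow_add' (norm_nonneg _) (by intro hcon; nlinarith), Real.rpow_one]
    calc ∫⁻ z in ball (0 : EuclideanSpace ℝ (Fin n)) 1,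
          ENNReal.ofReal (‖z‖ ^ (-((n:ℝ)+α))) *
            ∫⁻ x, ENNReal.ofReal |phi n x - phi n (x + z)|
        ≤ ∫⁻ z in ball (0 : EuclideanSpace ℝ (Fin n)) 1,
            ENNReal.ofReal (‖z‖ ^ (-((n:ℝ)+α-1))) *
              volume (ball (0 : EuclideanSpace ℝ (Fin n)) 2) := by
          refine setLIntegral_mono (by fun_prop) fun z hz => ?_
          have h1 := hIba z (le_of_lt (mem_ball_zero_iff.1 hz))
          calc ENNReal.ofReal (‖z‖ ^ (-((n:ℝ)+α))) *
                ∫⁻ x, ENNReal.ofReal |phi n x - phi n (x + z)|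
              ≤ ENNReal.ofReal (‖z‖ ^ (-((n:ℝ)+α))) *
                (ENNReal.ofReal ‖z‖ * volume (ball (0 : EuclideanSpace ℝ (Fin n)) 2)) :=
                mul_le_mul_right h1 _
            _ = ENNReal.ofReal (‖z‖ ^ (-((n:ℝ)+α-1))) *
                volume (ball (0 : EuclideanSpace ℝ (Fin n)) 2) := by
                rw [← mul_assoc, hzz]
      _ = (∫⁻ z in ball (0 : EuclideanSpace ℝ (Fin n)) 1,
            ENNReal.ofReal (‖z‖ ^ (-((n:ℝ)+α-1)))) *
            volume (ball (0 : EuclideanSpace ℝ (Fin n)) 2) :=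
          lintegral_mul_const' _ _ measure_ball_lt_top.ne
      _ < ⊤ := by
          refine ENNReal.mul_lt_top ?_ measure_ball_lt_top
          exact lint_ball_rpow_lt_top n (by linarith) (by linarith)
  · -- far part
    calc ∫⁻ z in (ball (0 : EuclideanSpace ℝ (Fin n)) 1)ᶜ,
          ENNReal.ofReal (‖z‖ ^ (-((n:ℝ)+α))) *
            ∫⁻ x, ENNReal.ofReal |phi n x - phi n (x + z)|
        ≤ ∫⁻ z in (ball (0 : EuclideanSpace ℝ (Fin n)) 1)ᶜ,
            ENNReal.ofReal (‖z‖ ^ (-((n:ℝ)+α))) *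
              (2 * ∫⁻ x, ENNReal.ofReal (phi n x)) := by
          refine setLIntegral_mono (by fun_prop) fun z _ => ?_
          exact mul_le_mul_right (hIbb z) _
      _ = (∫⁻ z in (ball (0 : EuclideanSpace ℝ (Fin n)) 1)ᶜ,
            ENNReal.ofReal (‖z‖ ^ (-((n:ℝ)+α)))) *
            (2 * ∫⁻ x, ENNReal.ofReal (phi n x)) :=
          lintegral_mul_const' _ _ (ENNReal.mul_ne_top (by norm_num) hLfin.ne)
      _ < ⊤ := by
          refine ENNReal.mul_lt_top ?_ ?_
          · exact lint_compl_ball_rpow_lt_top n (by linarith)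
          · exact ENNReal.mul_lt_top (by norm_num) hLfin

/-! ### Scaling -/

lemma lintegral_comp_smul (n : ℕ) (g : EuclideanSpace ℝ (Fin n) → ℝ≥0∞) (hg : Measurable g)
    {R : ℝ} (hR : 0 < R) :
    ∫⁻ x, g x = ENNReal.ofReal (R ^ n) * ∫⁻ x, g (R • x) := by
  have h1 : (∫⁻ x, g (R • x)) =
      ENNReal.ofReal |(R ^ Module.finrank ℝ (EuclideanSpace ℝ (Fin n)))⁻¹| * ∫⁻ x, g x := by
    rw [← lintegral_map hg (measurable_const_smul R),
      Measure.map_addHaar_smul volume hR.ne', lintegral_smul_measure, smul_eq_mul]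
  rw [h1, finrank_euclideanSpace_fin, ← mul_assoc]
  have h2 : ENNReal.ofReal (R ^ n) * ENNReal.ofReal |(R ^ n)⁻¹| = 1 := by
    rw [abs_of_nonneg (inv_nonneg.2 (pow_pos hR n).le),
      ← ENNReal.ofReal_mul (pow_pos hR n).le, mul_inv_cancel₀ (pow_pos hR n).ne']
    exact ENNReal.ofReal_one
  rw [h2, one_mul]

lemma sem_scale (n : ℕ) {α : ℝ} {v : EuclideanSpace ℝ (Fin n) → ℝ} (hv : Measurable v)
    {R : ℝ} (hR : 0 < R) :
    Sem n α (fun x => v (R⁻¹ • x)) = ENNReal.ofReal (R ^ ((n:ℝ) - α)) * Sem n α v := by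
  have hRne : R ≠ 0 := hR.ne'
  have stepA : ∀ x : EuclideanSpace ℝ (Fin n),
      (∫⁻ y, ENNReal.ofReal (|v (R⁻¹ • x) - v (R⁻¹ • y)| * ‖x - y‖ ^ (-((n:ℝ)+α)))) =
      ENNReal.ofReal (R ^ n) *
        ∫⁻ y, ENNReal.ofReal (|v (R⁻¹ • x) - v y| * ‖x - R • y‖ ^ (-((n:ℝ)+α))) := by
    intro x
    have hg : Measurable fun y : EuclideanSpace ℝ (Fin n) =>
        ENNReal.ofReal (|v (R⁻¹ • x) - v (R⁻¹ • y)| * ‖x - y‖ ^ (-((n:ℝ)+α))) := by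
      apply Measurable.ennreal_ofReal
      apply Measurable.mul
      · exact (measurable_const.sub (hv.comp (measurable_const_smul R⁻¹))).abs
      · fun_prop
    rw [lintegral_comp_smul n _ hg hR]
    congr 1
    refine lintegral_congr fun y => ?_
    simp only [smul_smul]
    rw [inv_mul_cancel₀ hRne, one_smul]
  have hNm : Measurable fun x : EuclideanSpace ℝ (Fin n) =>
      ∫⁻ y, ENNReal.ofReal (|v (R⁻¹ • x) - v y| * ‖x - R • y‖ ^ (-((n:ℝ)+α))) := by
    apply Measurable.lintegral_prod_right
      (f := fun x y => ENNReal.ofReal (|v (R⁻¹ • x) - v y| * ‖x - R • y‖ ^ (-((n:ℝ)+α))))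
    refine Measurable.ennreal_ofReal (Measurable.mul ?_ ?_)
    · exact ((hv.comp ((measurable_const_smul R⁻¹).comp measurable_fst)).sub
        (hv.comp measurable_snd)).abs
    · have hsm : Measurable fun w : EuclideanSpace ℝ (Fin n) × EuclideanSpace ℝ (Fin n) =>
          w.1 - R • w.2 := measurable_fst.sub ((measurable_const_smul R).comp measurable_snd)
      fun_prop
  have stepC : (∫⁻ x, ∫⁻ y,
        ENNReal.ofReal (|v (R⁻¹ • x) - v y| * ‖x - R • y‖ ^ (-((n:ℝ)+α)))) =
      ENNReal.ofReal (R ^ n) * ∫⁻ x, ∫⁻ y,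
        ENNReal.ofReal (|v x - v y| * ‖R • x - R • y‖ ^ (-((n:ℝ)+α))) := by
    rw [lintegral_comp_smul n _ hNm hR]
    congr 1
    refine lintegral_congr fun x => ?_
    refine lintegral_congr fun y => ?_
    simp only [smul_smul]
    rw [inv_mul_cancel₀ hRne, one_smul]
  have stepD : (∫⁻ x, ∫⁻ y,
        ENNReal.ofReal (|v x - v y| * ‖R • x - R • y‖ ^ (-((n:ℝ)+α)))) =
      ENNReal.ofReal (R ^ (-((n:ℝ)+α))) * Sem n α v := by
    have hSv : Sem n α v =
        ∫⁻ x, ∫⁻ y, ENNReal.ofReal (|v x - v y| * ‖x - y‖ ^ (-((n:ℝ)+α))) := rfl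
    rw [hSv, ← lintegral_const_mul' _ _ ENNReal.ofReal_ne_top]
    refine lintegral_congr fun x => ?_
    rw [← lintegral_const_mul' _ _ ENNReal.ofReal_ne_top]
    refine lintegral_congr fun y => ?_
    have h1 : ‖R • x - R • y‖ = R * ‖x - y‖ := by
      rw [← smul_sub, norm_smul, Real.norm_eq_abs, abs_of_pos hR]
    rw [h1, Real.mul_rpow hR.le (norm_nonneg _),
      ← ENNReal.ofReal_mul (Real.rpow_nonneg hR.le _)]
    congr 1
    ring
  calc Sem n α (fun x => v (R⁻¹ • x))
      = ∫⁻ x, ∫⁻ y, ENNReal.ofReal (|v (R⁻¹ • x) - v (R⁻¹ • y)| * ‖x - y‖ ^ (-((n:ℝ)+α))) :=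
        rfl
    _ = ∫⁻ x, ENNReal.ofReal (R ^ n) *
          ∫⁻ y, ENNReal.ofReal (|v (R⁻¹ • x) - v y| * ‖x - R • y‖ ^ (-((n:ℝ)+α))) :=
        lintegral_congr stepA
    _ = ENNReal.ofReal (R ^ n) * ∫⁻ x,
          ∫⁻ y, ENNReal.ofReal (|v (R⁻¹ • x) - v y| * ‖x - R • y‖ ^ (-((n:ℝ)+α))) :=
        lintegral_const_mul' _ _ ENNReal.ofReal_ne_top
    _ = ENNReal.ofReal (R ^ n) * (ENNReal.ofReal (R ^ n) * ∫⁻ x, ∫⁻ y,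
          ENNReal.ofReal (|v x - v y| * ‖R • x - R • y‖ ^ (-((n:ℝ)+α)))) := by rw [stepC]
    _ = ENNReal.ofReal (R ^ n) * (ENNReal.ofReal (R ^ n) *
          (ENNReal.ofReal (R ^ (-((n:ℝ)+α))) * Sem n α v)) := by rw [stepD]
    _ = ENNReal.ofReal (R ^ ((n:ℝ) - α)) * Sem n α v := by
        rw [← mul_assoc, ← mul_assoc]
        congr 1
        rw [← ENNReal.ofReal_mul (pow_pos hR n).le,
          ← ENNReal.ofReal_mul (mul_pos (pow_pos hR n) (pow_pos hR n)).le]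
        congr 1
        rw [← Real.rpow_natCast R n, ← Real.rpow_add hR, ← Real.rpow_add hR]
        congr 1
        ring

end CMCProofAux

end CMCProofAux

/-- **Proposition 7.1.** If a measurable `u : ℝⁿ → ℝ` is a weak solution of `𝓗_α u = h`
in `ℝⁿ` for a constant `h`, then `h = 0`. -/
theorem cmc_graph_is_minimal (n : ℕ) (hn : 1 ≤ n) (α : ℝ) (hα : α ∈ Set.Ioo (0 : ℝ) 1)
    (u : EuclideanSpace ℝ (Fin n) → ℝ) (h : ℝ) (hu : IsWeakSol n α u h) :
    h = 0 := by
  obtain ⟨hα0, hα1⟩ := hα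
  obtain ⟨hum, hweak⟩ := hu
  have hI : 0 < ∫ x, CMCProofAux.phi n x := CMCProofAux.phi_integral_pos n
  have hSφ : CMCProofAux.Sem n α (CMCProofAux.phi n) < ⊤ :=
    CMCProofAux.sem_phi_lt_top n hn hα0 hα1
  set I : ℝ := ∫ x, CMCProofAux.phi n x with hIdef
  set S : ℝ := (CMCProofAux.Sem n α (CMCProofAux.phi n)).toReal with hSdef
  have key : ∀ R : ℝ, 1 ≤ R → |h| ≤ (Real.pi * S / I) * R ^ (-α) := by
    intro R hR1
    have hR : (0:ℝ) < R := lt_of_lt_of_le one_pos hR1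
    set vR : EuclideanSpace ℝ (Fin n) → ℝ := fun x => CMCProofAux.phi n (R⁻¹ • x) with hvRdef
    have hvm : Measurable vR :=
      (CMCProofAux.phi_cont n).measurable.comp (measurable_const_smul _)
    have hscale : CMCProofAux.Sem n α vR =
        ENNReal.ofReal (R ^ ((n:ℝ) - α)) * CMCProofAux.Sem n α (CMCProofAux.phi n) :=
      CMCProofAux.sem_scale n (CMCProofAux.phi_cont n).measurable hR
    have hSfin : CMCProofAux.Sem n α vR ≠ ⊤ := by
      rw [hscale]
      exact ENNReal.mul_ne_top ENNReal.ofReal_ne_top hSφ.ne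
    have hvInt : Integrable vR := by
      refine ((CMCProofAux.phi_cont n).comp (continuous_const_smul R⁻¹)).integrable_of_hasCompactSupport ?_
      refine HasCompactSupport.intro (isCompact_closedBall (0 : EuclideanSpace ℝ (Fin n)) R)
        fun x hx => ?_
      rw [mem_closedBall_zero_iff, not_le] at hx
      refine CMCProofAux.phi_eq_zero n ?_
      rw [norm_smul, norm_inv, Real.norm_eq_abs, abs_of_pos hR, inv_mul_eq_div, le_div_iff₀ hR]
      linarith
    have hmem : MemWa1 n α vR := ⟨hvInt, Ne.lt_top hSfin⟩
    have heq := hweak vR hmem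
    have hIR : ∫ x, vR x = R ^ n * I := by
      have h0 := Measure.integral_comp_inv_smul_of_nonneg
        (volume : Measure (EuclideanSpace ℝ (Fin n))) (CMCProofAux.phi n) hR.le
      simpa [hvRdef, hIdef, finrank_euclideanSpace_fin, smul_eq_mul] using h0
    have hb := CMCProofAux.pairing_abs_le hn hα0 hum hvm hSfin
    rw [heq, hIR, hscale, ENNReal.toReal_mul,
      ENNReal.toReal_ofReal (Real.rpow_nonneg hR.le _)] at hb
    have hRn : (0:ℝ) < R ^ n := pow_pos hR n
    rw [abs_mul, abs_of_pos (mul_pos hRn hI)] at hb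
    have hsplit : R ^ ((n:ℝ) - α) = R ^ n * R ^ (-α) := by
      rw [Real.rpow_sub hR, Real.rpow_natCast, Real.rpow_neg hR.le, div_eq_mul_inv]
    rw [hsplit] at hb
    rw [← mul_le_mul_iff_of_pos_right (mul_pos hRn hI)]
    calc |h| * (R ^ n * I) ≤ Real.pi * (R ^ n * R ^ (-α) * S) := hb
      _ = Real.pi * S / I * R ^ (-α) * (R ^ n * I) := by
          field_simp
  have hlim : Tendsto (fun R : ℝ => (Real.pi * S / I) * R ^ (-α)) atTop (𝓝 0) := by
    have := (tendsto_rpow_neg_atTop hα0).const_mul (Real.pi * S / I)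
    simpa using this
  have habs : |h| ≤ 0 :=
    ge_of_tendsto hlim (Filter.eventually_atTop.2 ⟨1, fun R hR => key R hR⟩)
  exact abs_eq_zero.1 (le_antisymm habs (abs_nonneg h))
end

section
/- Let n ≥ 1 be an integer and α ∈ (0,1). There exists a constant C > 0, depending only on n and α, such that for every measurable function u : ℝ^n → ℝ and every R > 0, the characteristic function χ_{B_R} of the ball B_R ⊆ ℝ^n belongs to W^{α,1}(ℝ^n) and |⟨𝓗_α u, χ_{B_R}⟩| ≤ C R^{n−α}. -/
open MeasureTheory Filter Metric Topology
open scoped ENNReal RealInnerProductSpace symmDiff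

section Helpers
open Set


noncomputable abbrev EucSp (n : ℕ) := EuclideanSpace ℝ (Fin n)

lemma polar_lintegral (n : ℕ) (hn : 1 ≤ n) (f : ℝ → ℝ≥0∞) (hf : Measurable f) :
    ∫⁻ x : EucSp n, f ‖x‖ =
      (volume : Measure (EucSp n)).toSphere Set.univ *
        ∫⁻ r in Set.Ioi (0 : ℝ), ENNReal.ofReal (r ^ (n - 1)) * f r := by
  have : Nontrivial (EucSp n) := by
    refine ⟨EuclideanSpace.single ⟨0, hn⟩ 1, 0, ?_⟩
    intro h
    have := congrArg (fun v => v ⟨0, hn⟩) h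
    simp at this
  have hdim : Module.finrank ℝ (EucSp n) = n := finrank_euclideanSpace_fin
  have h1 : ∫⁻ x : EucSp n, f ‖x‖
      = ∫⁻ x : ({0}ᶜ : Set (EucSp n)), f ‖x.1‖
          ∂(Measure.comap Subtype.val (volume : Measure (EucSp n))) := by
    rw [lintegral_subtype_comap (measurableSet_singleton (0 : EucSp n)).compl
      (fun x => f ‖x‖), restrict_compl_singleton]
  have h2 : ∫⁻ x : ({0}ᶜ : Set (EucSp n)), f ‖x.1‖
          ∂(Measure.comap Subtype.val (volume : Measure (EucSp n)))
      = ∫⁻ p : sphere (0 : EucSp n) 1 × Ioi (0 : ℝ), f p.2.1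
          ∂((volume : Measure (EucSp n)).toSphere.prod
            (.volumeIoiPow (Module.finrank ℝ (EucSp n) - 1))) := by
    have := (volume : Measure (EucSp n)).measurePreserving_homeomorphUnitSphereProd.lintegral_comp
      (f := fun p : sphere (0 : EucSp n) 1 × Ioi (0 : ℝ) => f p.2.1)
      (hf.comp (measurable_subtype_coe.comp measurable_snd))
    rw [← this]
    refine lintegral_congr fun x => ?_
    simp
  have h3 : ∫⁻ p : sphere (0 : EucSp n) 1 × Ioi (0 : ℝ), f p.2.1
          ∂((volume : Measure (EucSp n)).toSphere.prod
            (.volumeIoiPow (Module.finrank ℝ (EucSp n) - 1)))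
      = (volume : Measure (EucSp n)).toSphere Set.univ *
          ∫⁻ r : Ioi (0 : ℝ), f r.1
            ∂(Measure.volumeIoiPow (Module.finrank ℝ (EucSp n) - 1)) := by
    rw [lintegral_prod (fun p : sphere (0 : EucSp n) 1 × Ioi (0 : ℝ) => f p.2.1) ((hf.comp (measurable_subtype_coe.comp measurable_snd)).aemeasurable)]
    simp [lintegral_const, mul_comm]
  have h4 : ∫⁻ r : Ioi (0 : ℝ), f r.1
            ∂(Measure.volumeIoiPow (Module.finrank ℝ (EucSp n) - 1))
      = ∫⁻ r in Set.Ioi (0 : ℝ), ENNReal.ofReal (r ^ (n - 1)) * f r := by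
    show (∫⁻ r : Ioi (0:ℝ), (f ∘ Subtype.val) r
        ∂(Measure.volumeIoiPow (Module.finrank ℝ (EucSp n) - 1))) = _
    rw [Measure.volumeIoiPow, lintegral_withDensity_eq_lintegral_mul
      (Measure.comap Subtype.val volume)
      (f := fun r : Ioi (0:ℝ) => ENNReal.ofReal (r.1 ^ (Module.finrank ℝ (EucSp n) - 1)))
      ((measurable_subtype_coe.pow_const _).ennreal_ofReal)
      (hf.comp measurable_subtype_coe), hdim]
    rw [← lintegral_subtype_comap measurableSet_Ioi
      (fun r : ℝ => ENNReal.ofReal (r ^ (n - 1)) * f r)]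
    rfl
  rw [h1, h2, h3, h4]

lemma tail1d {α ρ : ℝ} (hα : 0 < α) (hρ : 0 < ρ) :
    ∫⁻ r in Ici ρ, ENNReal.ofReal (r ^ (-1 - α)) = ENNReal.ofReal (ρ ^ (-α) / α) := by
  rw [← Measure.restrict_congr_set Ioi_ae_eq_Ici,
    ← ofReal_integral_eq_lintegral_ofReal (integrableOn_Ioi_rpow_of_lt (by linarith) hρ)
      ((ae_restrict_iff' measurableSet_Ioi).2 (Filter.Eventually.of_forall fun r hr =>
        Real.rpow_nonneg (le_of_lt (lt_trans hρ hr)) _)),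
    integral_Ioi_rpow_of_lt (by linarith) hρ]
  congr 1
  have : -1 - α + 1 = -α := by ring
  rw [this, neg_div, div_neg, neg_neg]

lemma inner1d {α R : ℝ} (hα : 0 < α) (hα1 : α < 1) (hR : 0 < R) :
    ∫⁻ r in Ioo 0 R, ENNReal.ofReal ((R - r) ^ (-α)) =
      ENNReal.ofReal (R ^ (1 - α) / (1 - α)) := by
  have hii : IntervalIntegrable (fun u : ℝ => u ^ (-α)) volume 0 R :=
    intervalIntegral.intervalIntegrable_rpow' (by linarith)
  have hii2 : IntervalIntegrable (fun r : ℝ => (R - r) ^ (-α)) volume 0 R := by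
    have := (hii.comp_sub_left R).symm
    simpa using this
  have hint : IntegrableOn (fun r : ℝ => (R - r) ^ (-α)) (Ioo 0 R) volume := by
    rw [← intervalIntegrable_iff_integrableOn_Ioo_of_le hR.le]
    exact hii2
  rw [← ofReal_integral_eq_lintegral_ofReal hint
    ((ae_restrict_iff' measurableSet_Ioo).2 (Filter.Eventually.of_forall fun r hr =>
      Real.rpow_nonneg (by linarith [hr.2]) _))]
  congr 1
  rw [← integral_Ioc_eq_integral_Ioo, ← intervalIntegral.integral_of_le hR.le]
  have := intervalIntegral.integral_comp_sub_left (a := (0:ℝ)) (b := R)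
    (fun u : ℝ => u ^ (-α)) R
  simp only [sub_zero, sub_self] at this
  rw [this, integral_rpow (Or.inl (by linarith))]
  rw [Real.zero_rpow (by linarith : -α + 1 ≠ 0)]
  have h1 : -α + 1 = 1 - α := by ring
  rw [h1, sub_zero]

noncomputable def sphC (n : ℕ) : ℝ≥0∞ := (volume : Measure (EucSp n)).toSphere Set.univ

lemma sphC_ne_top (n : ℕ) : sphC n ≠ ⊤ := measure_ne_top _ _

lemma tailE (n : ℕ) (hn : 1 ≤ n) {α ρ : ℝ} (hα : 0 < α) (hρ : 0 < ρ) :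
    ∫⁻ x in (ball (0 : EucSp n) ρ)ᶜ, ENNReal.ofReal (‖x‖ ^ (-((n : ℝ) + α)))
      = sphC n * ENNReal.ofReal (ρ ^ (-α) / α) := by
  set f : ℝ → ℝ≥0∞ := (Ici ρ).indicator fun r => ENNReal.ofReal (r ^ (-((n : ℝ) + α))) with hf
  have hfm : Measurable f :=
    (Measurable.ennreal_ofReal (by fun_prop)).indicator measurableSet_Ici
  have h1 : ∫⁻ x in (ball (0 : EucSp n) ρ)ᶜ, ENNReal.ofReal (‖x‖ ^ (-((n : ℝ) + α)))
      = ∫⁻ x : EucSp n, f ‖x‖ := by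
    rw [← lintegral_indicator measurableSet_ball.compl]
    refine lintegral_congr fun x => ?_
    by_cases hx : x ∈ (ball (0 : EucSp n) ρ)ᶜ
    · have hx' : ‖x‖ ∈ Ici ρ := by
        simpa [mem_ball, dist_zero_right, not_lt] using hx
      rw [Set.indicator_of_mem hx, hf, Set.indicator_of_mem hx']
    · have hx' : ‖x‖ ∉ Ici ρ := by
        simpa [mem_ball, dist_zero_right, not_le] using hx
      rw [Set.indicator_of_notMem hx, hf, Set.indicator_of_notMem hx']
  rw [h1, polar_lintegral n hn f hfm]
  congr 1
  have h2 : ∀ r ∈ Ioi (0:ℝ), ENNReal.ofReal (r ^ (n - 1)) * f r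
      = (Ici ρ).indicator (fun r => ENNReal.ofReal (r ^ (-1 - α))) r := by
    intro r hr
    by_cases hrρ : r ∈ Ici ρ
    · rw [hf]
      simp only [Set.indicator_of_mem hrρ]
      rw [← ENNReal.ofReal_mul (pow_nonneg (le_of_lt hr) _)]
      congr 1
      rw [← Real.rpow_natCast r (n - 1), ← Real.rpow_add hr]
      congr 1
      have : ((n - 1 : ℕ) : ℝ) = (n : ℝ) - 1 := by
        have := Nat.cast_sub hn (R := ℝ)
        simpa using this
      rw [this]; ring
    · rw [hf]
      simp [Set.indicator_of_notMem hrρ]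
  rw [setLIntegral_congr_fun measurableSet_Ioi h2,
    lintegral_indicator measurableSet_Ici, Measure.restrict_restrict measurableSet_Ici,
    show Ici ρ ∩ Ioi (0:ℝ) = Ici ρ from
      Set.inter_eq_left.2 fun r hr => lt_of_lt_of_le hρ hr]
  exact tail1d hα hρ

lemma innerE (n : ℕ) (hn : 1 ≤ n) {α R : ℝ} (hα : 0 < α) (hα1 : α < 1) (hR : 0 < R) :
    ∫⁻ x in ball (0 : EucSp n) R, ENNReal.ofReal ((R - ‖x‖) ^ (-α))
      ≤ sphC n * (ENNReal.ofReal (R ^ ((n : ℝ) - 1)) *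
          ENNReal.ofReal (R ^ (1 - α) / (1 - α))) := by
  set f : ℝ → ℝ≥0∞ := (Iio R).indicator fun r => ENNReal.ofReal ((R - r) ^ (-α)) with hf
  have hfm : Measurable f :=
    (Measurable.ennreal_ofReal (by fun_prop)).indicator measurableSet_Iio
  have h1 : ∫⁻ x in ball (0 : EucSp n) R, ENNReal.ofReal ((R - ‖x‖) ^ (-α))
      = ∫⁻ x : EucSp n, f ‖x‖ := by
    rw [← lintegral_indicator measurableSet_ball]
    refine lintegral_congr fun x => ?_
    by_cases hx : x ∈ ball (0 : EucSp n) R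
    · have hx' : ‖x‖ ∈ Iio R := by simpa [mem_ball, dist_zero_right] using hx
      rw [Set.indicator_of_mem hx, hf, Set.indicator_of_mem hx']
    · have hx' : ‖x‖ ∉ Iio R := by simpa [mem_ball, dist_zero_right] using hx
      rw [Set.indicator_of_notMem hx, hf, Set.indicator_of_notMem hx']
  rw [h1, polar_lintegral n hn f hfm]
  refine mul_le_mul_right ?_ _
  have h2 : ∀ r ∈ Ioi (0:ℝ), ENNReal.ofReal (r ^ (n - 1)) * f r
      ≤ (Ioo 0 R).indicator
          (fun r => ENNReal.ofReal (R ^ ((n:ℝ) - 1)) * ENNReal.ofReal ((R - r) ^ (-α))) r := by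
    intro r hr
    by_cases hrR : r < R
    · have hmem : r ∈ Ioo (0:ℝ) R := ⟨hr, hrR⟩
      rw [Set.indicator_of_mem hmem, hf, Set.indicator_of_mem (by exact hrR : r ∈ Iio R)]
      refine mul_le_mul_left (ENNReal.ofReal_le_ofReal ?_) _
      rw [← Real.rpow_natCast r (n - 1)]
      have hcast : ((n - 1 : ℕ) : ℝ) = (n : ℝ) - 1 := by
        have := Nat.cast_sub hn (R := ℝ)
        simpa using this
      rw [hcast]
      exact Real.rpow_le_rpow (le_of_lt hr) hrR.le (by
        have : (1:ℝ) ≤ (n:ℝ) := by exact_mod_cast hn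
        linarith)
    · rw [hf, Set.indicator_of_notMem (by simpa using not_lt.1 (by exact fun h => hrR h) : r ∉ Iio R)]
      simp
  calc ∫⁻ r in Ioi (0:ℝ), ENNReal.ofReal (r ^ (n - 1)) * f r
      ≤ ∫⁻ r in Ioi (0:ℝ), (Ioo 0 R).indicator
          (fun r => ENNReal.ofReal (R ^ ((n:ℝ) - 1)) * ENNReal.ofReal ((R - r) ^ (-α))) r :=
        setLIntegral_mono' measurableSet_Ioi h2
    _ = ∫⁻ r in Ioo (0:ℝ) R,
          ENNReal.ofReal (R ^ ((n:ℝ) - 1)) * ENNReal.ofReal ((R - r) ^ (-α)) := by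
        rw [lintegral_indicator measurableSet_Ioo, Measure.restrict_restrict measurableSet_Ioo,
          show Ioo (0:ℝ) R ∩ Ioi (0:ℝ) = Ioo 0 R from Set.inter_eq_left.2 fun r hr => hr.1]
    _ = ENNReal.ofReal (R ^ ((n:ℝ) - 1)) * ∫⁻ r in Ioo (0:ℝ) R,
          ENNReal.ofReal ((R - r) ^ (-α)) := lintegral_const_mul' _ _ ENNReal.ofReal_ne_top
    _ = ENNReal.ofReal (R ^ ((n:ℝ) - 1)) * ENNReal.ofReal (R ^ (1 - α) / (1 - α)) := by
        rw [inner1d hα hα1 hR]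

lemma translE (n : ℕ) {α R : ℝ} {x : EucSp n} (hx : x ∈ ball (0 : EucSp n) R) :
    ∫⁻ y in (ball (0 : EucSp n) R)ᶜ, ENNReal.ofReal (‖x - y‖ ^ (-((n : ℝ) + α)))
      ≤ ∫⁻ w in (ball (0 : EucSp n) (R - ‖x‖))ᶜ,
          ENNReal.ofReal (‖w‖ ^ (-((n : ℝ) + α))) := by
  set F : EucSp n → ℝ≥0∞ :=
    ((ball (0 : EucSp n) (R - ‖x‖))ᶜ).indicator
      (fun w => ENNReal.ofReal (‖w‖ ^ (-((n : ℝ) + α)))) with hF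
  have key : ∀ y : EucSp n,
      ((ball (0 : EucSp n) R)ᶜ).indicator
        (fun y => ENNReal.ofReal (‖x - y‖ ^ (-((n : ℝ) + α)))) y ≤ F (y - x) := by
    intro y
    by_cases hy : y ∈ (ball (0 : EucSp n) R)ᶜ
    · have hRy : R ≤ ‖y‖ := by simpa [mem_ball, dist_zero_right, not_lt] using hy
      have hmem : y - x ∈ (ball (0 : EucSp n) (R - ‖x‖))ᶜ := by
        simp only [mem_compl_iff, mem_ball, dist_zero_right, not_lt]
        have := norm_sub_norm_le y x
        linarith [this]
      rw [Set.indicator_of_mem hy, hF, Set.indicator_of_mem hmem, norm_sub_rev]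
    · rw [Set.indicator_of_notMem hy]
      exact zero_le
  calc ∫⁻ y in (ball (0 : EucSp n) R)ᶜ, ENNReal.ofReal (‖x - y‖ ^ (-((n : ℝ) + α)))
      = ∫⁻ y, ((ball (0 : EucSp n) R)ᶜ).indicator
          (fun y => ENNReal.ofReal (‖x - y‖ ^ (-((n : ℝ) + α)))) y :=
        (lintegral_indicator measurableSet_ball.compl _).symm
    _ ≤ ∫⁻ y, F (y - x) := lintegral_mono key
    _ = ∫⁻ w, F w := lintegral_sub_right_eq_self F x
    _ = ∫⁻ w in (ball (0 : EucSp n) (R - ‖x‖))ᶜ,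
          ENNReal.ofReal (‖w‖ ^ (-((n : ℝ) + α))) :=
        lintegral_indicator measurableSet_ball.compl _

lemma term1_bound (n : ℕ) (hn : 1 ≤ n) {α R : ℝ} (hα : 0 < α) (hα1 : α < 1) (hR : 0 < R) :
    ∫⁻ x in ball (0 : EucSp n) R, ∫⁻ y in (ball (0 : EucSp n) R)ᶜ,
        ENNReal.ofReal (‖x - y‖ ^ (-((n : ℝ) + α)))
      ≤ sphC n * sphC n * ENNReal.ofReal α⁻¹ * ENNReal.ofReal (1 - α)⁻¹ *
          ENNReal.ofReal (R ^ ((n : ℝ) - α)) := by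
  have step1 : ∫⁻ x in ball (0 : EucSp n) R, ∫⁻ y in (ball (0 : EucSp n) R)ᶜ,
        ENNReal.ofReal (‖x - y‖ ^ (-((n : ℝ) + α)))
      ≤ ∫⁻ x in ball (0 : EucSp n) R,
          sphC n * ENNReal.ofReal α⁻¹ * ENNReal.ofReal ((R - ‖x‖) ^ (-α)) := by
    refine setLIntegral_mono' measurableSet_ball fun x hx => ?_
    refine (translE n hx).trans ?_
    have hρ : 0 < R - ‖x‖ := by simpa [mem_ball, dist_zero_right, sub_pos] using hx
    rw [tailE n hn hα hρ]
    rw [div_eq_mul_inv, mul_comm ((R - ‖x‖) ^ (-α)) α⁻¹,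
      ENNReal.ofReal_mul (by positivity), ← mul_assoc]
  refine step1.trans ?_
  rw [lintegral_const_mul' _ _ (by
    exact ENNReal.mul_ne_top (sphC_ne_top n) ENNReal.ofReal_ne_top)]
  calc sphC n * ENNReal.ofReal α⁻¹ *
        ∫⁻ x in ball (0 : EucSp n) R, ENNReal.ofReal ((R - ‖x‖) ^ (-α))
      ≤ sphC n * ENNReal.ofReal α⁻¹ *
          (sphC n * (ENNReal.ofReal (R ^ ((n : ℝ) - 1)) *
            ENNReal.ofReal (R ^ (1 - α) / (1 - α)))) :=
        mul_le_mul_right (innerE n hn hα hα1 hR) _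
    _ = sphC n * sphC n * ENNReal.ofReal α⁻¹ * ENNReal.ofReal (1 - α)⁻¹ *
          ENNReal.ofReal (R ^ ((n : ℝ) - α)) := by
        have e1 : ENNReal.ofReal (R ^ ((n:ℝ) - 1)) * ENNReal.ofReal (R ^ (1 - α) / (1 - α))
            = ENNReal.ofReal (R ^ ((n:ℝ) - α)) * ENNReal.ofReal (1 - α)⁻¹ := by
          rw [div_eq_mul_inv, ENNReal.ofReal_mul (by positivity), ← mul_assoc,
            ← ENNReal.ofReal_mul (by positivity), ← Real.rpow_add hR]
          congr 2
          ring
        rw [e1]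
        ring

lemma gagliardo_bound (n : ℕ) (hn : 1 ≤ n) {α R : ℝ} (hα : 0 < α) (hα1 : α < 1) (hR : 0 < R) :
    (∫⁻ x : EucSp n, ∫⁻ y : EucSp n,
        ENNReal.ofReal (|((ball (0 : EucSp n) R).indicator fun _ => (1:ℝ)) x -
          ((ball (0 : EucSp n) R).indicator fun _ => (1:ℝ)) y| * ‖x - y‖ ^ (-((n : ℝ) + α))))
      ≤ 2 * (sphC n * sphC n * ENNReal.ofReal α⁻¹ * ENNReal.ofReal (1 - α)⁻¹) *
          ENNReal.ofReal (R ^ ((n : ℝ) - α)) := by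
  set B := ball (0 : EucSp n) R with hB
  set χ : EucSp n → ℝ := B.indicator (fun _ => (1:ℝ)) with hχ
  set K : EucSp n → EucSp n → ℝ≥0∞ :=
    fun x y => ENNReal.ofReal (‖x - y‖ ^ (-((n : ℝ) + α))) with hK
  set H : EucSp n → ℝ≥0∞ :=
    fun x => ∫⁻ y, ENNReal.ofReal (|χ x - χ y| * ‖x - y‖ ^ (-((n : ℝ) + α))) with hH
  have hsplit : ∫⁻ x, H x = (∫⁻ x in B, H x) + ∫⁻ x in Bᶜ, H x :=
    (lintegral_add_compl H measurableSet_ball).symm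
  have hHB : ∀ x ∈ B, H x = ∫⁻ y in Bᶜ, K x y := by
    intro x hx
    rw [hH, ← lintegral_indicator measurableSet_ball.compl]
    refine lintegral_congr fun y => ?_
    by_cases hy : y ∈ B
    · rw [Set.indicator_of_notMem (Set.notMem_compl_iff.2 hy), hχ,
        Set.indicator_of_mem hx, Set.indicator_of_mem hy]
      simp
    · rw [Set.indicator_of_mem (Set.mem_compl hy), hχ,
        Set.indicator_of_mem hx, Set.indicator_of_notMem hy]
      simp [hK]
  have hHBc : ∀ x ∈ Bᶜ, H x = ∫⁻ y in B, K x y := by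
    intro x hx
    rw [hH, ← lintegral_indicator measurableSet_ball]
    refine lintegral_congr fun y => ?_
    by_cases hy : y ∈ B
    · rw [Set.indicator_of_mem hy, hχ,
        Set.indicator_of_notMem (by simpa using hx), Set.indicator_of_mem hy]
      simp [hK]
    · rw [Set.indicator_of_notMem hy, hχ,
        Set.indicator_of_notMem (by simpa using hx), Set.indicator_of_notMem hy]
      simp
  have hKmeas : Measurable (Function.uncurry K) := by
    apply Measurable.ennreal_ofReal
    fun_prop
  have hswap : ∫⁻ x in Bᶜ, ∫⁻ y in B, K x y = ∫⁻ x in B, ∫⁻ y in Bᶜ, K x y := by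
    rw [lintegral_lintegral_swap hKmeas.aemeasurable]
    refine lintegral_congr fun y => lintegral_congr fun x => ?_
    rw [hK]
    simp only
    rw [norm_sub_rev]
  calc ∫⁻ x, H x = (∫⁻ x in B, H x) + ∫⁻ x in Bᶜ, H x := hsplit
    _ = (∫⁻ x in B, ∫⁻ y in Bᶜ, K x y) + ∫⁻ x in Bᶜ, ∫⁻ y in B, K x y := by
        rw [setLIntegral_congr_fun measurableSet_ball hHB,
          setLIntegral_congr_fun measurableSet_ball.compl hHBc]
    _ = (∫⁻ x in B, ∫⁻ y in Bᶜ, K x y) + ∫⁻ x in B, ∫⁻ y in Bᶜ, K x y := by rw [hswap]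
    _ ≤ (sphC n * sphC n * ENNReal.ofReal α⁻¹ * ENNReal.ofReal (1 - α)⁻¹ *
          ENNReal.ofReal (R ^ ((n : ℝ) - α))) +
        (sphC n * sphC n * ENNReal.ofReal α⁻¹ * ENNReal.ofReal (1 - α)⁻¹ *
          ENNReal.ofReal (R ^ ((n : ℝ) - α))) :=
        add_le_add (term1_bound n hn hα hα1 hR) (term1_bound n hn hα hα1 hR)
    _ = 2 * (sphC n * sphC n * ENNReal.ofReal α⁻¹ * ENNReal.ofReal (1 - α)⁻¹) *
          ENNReal.ofReal (R ^ ((n : ℝ) - α)) := by ring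

noncomputable def GkerT (n : ℕ) (α t : ℝ) : ℝ :=
  ∫ τ in (0 : ℝ)..t, (1 + τ ^ 2) ^ (-((n : ℝ) + 1 + α) / 2)

lemma Gker_integrand_integrable (n : ℕ) {α : ℝ} (hα : 0 < α) :
    Integrable (fun τ : ℝ => (1 + τ ^ 2) ^ (-((n : ℝ) + 1 + α) / 2)) := by
  have h : (Module.finrank ℝ ℝ : ℝ) < (n : ℝ) + 1 + α := by
    simp only [Module.finrank_self, Nat.cast_one]
    have : (0:ℝ) ≤ (n:ℝ) := Nat.cast_nonneg n
    linarith
  have := integrable_rpow_neg_one_add_norm_sq (E := ℝ) (μ := volume) (r := (n : ℝ) + 1 + α) h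
  simpa [Real.norm_eq_abs, sq_abs] using this

lemma GkerT_abs_le (n : ℕ) {α : ℝ} (hα : 0 < α) (t : ℝ) :
    |GkerT n α t| ≤ ∫ τ : ℝ, (1 + τ ^ 2) ^ (-((n : ℝ) + 1 + α) / 2) := by
  set f : ℝ → ℝ := fun τ => (1 + τ ^ 2) ^ (-((n : ℝ) + 1 + α) / 2) with hfdef
  have hf : Integrable f := Gker_integrand_integrable n hα
  have hpos : ∀ τ : ℝ, 0 ≤ f τ := fun τ => Real.rpow_nonneg (by positivity) _
  rcases le_or_gt 0 t with ht | ht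
  · rw [GkerT, intervalIntegral.integral_of_le ht]
    rw [abs_of_nonneg (setIntegral_nonneg measurableSet_Ioc fun τ _ => hpos τ)]
    exact setIntegral_le_integral hf (Filter.Eventually.of_forall hpos)
  · rw [GkerT, intervalIntegral.integral_symm, abs_neg,
      intervalIntegral.integral_of_le ht.le]
    rw [abs_of_nonneg (setIntegral_nonneg measurableSet_Ioc fun τ _ => hpos τ)]
    exact setIntegral_le_integral hf (Filter.Eventually.of_forall hpos)

lemma Gker_abs_le' (n : ℕ) {α : ℝ} (hα : 0 < α) (t : ℝ) :
    |Gker n α t| ≤ ∫ τ : ℝ, (1 + τ ^ 2) ^ (-((n : ℝ) + 1 + α) / 2) := GkerT_abs_le n hα t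

end Helpers

/-- There is `C = C(n, α) > 0` such that for every measurable `u : ℝⁿ → ℝ` and every
`R > 0`, the indicator of `B_R` belongs to `W^{α,1}(ℝⁿ)` and
`|⟨𝓗_α u, χ_{B_R}⟩| ≤ C R^{n-α}`. -/
theorem pairing_ball_bound (n : ℕ) (hn : 1 ≤ n) (α : ℝ) (hα : α ∈ Set.Ioo (0 : ℝ) 1) :
    ∃ C : ℝ, 0 < C ∧
      ∀ u : EuclideanSpace ℝ (Fin n) → ℝ, Measurable u → ∀ R : ℝ, 0 < R →
        MemWa1 n α
          ((ball (0 : EuclideanSpace ℝ (Fin n)) R).indicator fun _ => (1 : ℝ)) ∧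
        |fracPairing n α u
            ((ball (0 : EuclideanSpace ℝ (Fin n)) R).indicator fun _ => (1 : ℝ))| ≤
          C * R ^ ((n : ℝ) - α) := by
  obtain ⟨hα0, hα1⟩ := hα
  set Λ : ℝ := ∫ τ : ℝ, (1 + τ ^ 2) ^ (-((n : ℝ) + 1 + α) / 2) with hΛ
  have hΛ0 : 0 ≤ Λ := integral_nonneg fun τ => Real.rpow_nonneg (by positivity) _
  set M : ℝ≥0∞ := 2 * (sphC n * sphC n * ENNReal.ofReal α⁻¹ * ENNReal.ofReal (1 - α)⁻¹)
    with hM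
  have hMne : M ≠ ⊤ := by
    rw [hM]
    exact ENNReal.mul_ne_top (by norm_num)
      (ENNReal.mul_ne_top (ENNReal.mul_ne_top (ENNReal.mul_ne_top (sphC_ne_top n)
        (sphC_ne_top n)) ENNReal.ofReal_ne_top) ENNReal.ofReal_ne_top)
  have hΛMne : ENNReal.ofReal Λ * M ≠ ⊤ := ENNReal.mul_ne_top ENNReal.ofReal_ne_top hMne
  set C : ℝ := (ENNReal.ofReal Λ * M).toReal + 1 with hC
  have hC0 : 0 < C := by positivity
  refine ⟨C, hC0, fun u hu R hR => ?_⟩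
  set χ : EuclideanSpace ℝ (Fin n) → ℝ :=
    (ball (0 : EuclideanSpace ℝ (Fin n)) R).indicator fun _ => (1 : ℝ) with hχ
  have hJ := gagliardo_bound n hn hα0 hα1 hR
  rw [← hχ, ← hM] at hJ
  constructor
  · constructor
    · rw [hχ, integrable_indicator_iff measurableSet_ball]
      exact integrableOn_const measure_ball_lt_top.ne
    · exact lt_of_le_of_lt hJ
        (ENNReal.mul_lt_top hMne.lt_top ENNReal.ofReal_lt_top)
  · have key : ENNReal.ofReal |fracPairing n α u χ| ≤
        ENNReal.ofReal Λ * M * ENNReal.ofReal (R ^ ((n : ℝ) - α)) := by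
      have s1 : ENNReal.ofReal |fracPairing n α u χ| ≤
          ∫⁻ x, ∫⁻ y, (‖Gker n α ((u x - u y) / ‖x - y‖) * (χ x - χ y) *
            ‖x - y‖ ^ (-((n : ℝ) + α))‖₊ : ℝ≥0∞) := by
        rw [← Real.enorm_eq_ofReal_abs]
        exact (enorm_integral_le_lintegral_enorm _).trans
          (lintegral_mono fun x => enorm_integral_le_lintegral_enorm _)
      have s2 : ∀ x y : EuclideanSpace ℝ (Fin n),
          (‖Gker n α ((u x - u y) / ‖x - y‖) * (χ x - χ y) *
            ‖x - y‖ ^ (-((n : ℝ) + α))‖₊ : ℝ≥0∞)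
          ≤ ENNReal.ofReal Λ *
              ENNReal.ofReal (|χ x - χ y| * ‖x - y‖ ^ (-((n : ℝ) + α))) := by
        intro x y
        rw [← enorm_eq_nnnorm, Real.enorm_eq_ofReal_abs, ← ENNReal.ofReal_mul hΛ0]
        apply ENNReal.ofReal_le_ofReal
        rw [abs_mul, abs_mul, abs_of_nonneg (Real.rpow_nonneg (norm_nonneg _) _)]
        calc |Gker n α ((u x - u y) / ‖x - y‖)| * |χ x - χ y| *
              ‖x - y‖ ^ (-((n : ℝ) + α))
            ≤ Λ * |χ x - χ y| * ‖x - y‖ ^ (-((n : ℝ) + α)) := by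
              have := Gker_abs_le' n hα0 ((u x - u y) / ‖x - y‖)
              gcongr
          _ = Λ * (|χ x - χ y| * ‖x - y‖ ^ (-((n : ℝ) + α))) := by ring
      refine s1.trans ?_
      calc ∫⁻ x, ∫⁻ y, (‖Gker n α ((u x - u y) / ‖x - y‖) * (χ x - χ y) *
              ‖x - y‖ ^ (-((n : ℝ) + α))‖₊ : ℝ≥0∞)
          ≤ ∫⁻ x, ∫⁻ y, ENNReal.ofReal Λ *
              ENNReal.ofReal (|χ x - χ y| * ‖x - y‖ ^ (-((n : ℝ) + α))) :=
            lintegral_mono fun x => lintegral_mono fun y => s2 x y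
        _ = ENNReal.ofReal Λ *
              ∫⁻ x, ∫⁻ y, ENNReal.ofReal (|χ x - χ y| * ‖x - y‖ ^ (-((n : ℝ) + α))) := by
            rw [← lintegral_const_mul' _ _ ENNReal.ofReal_ne_top]
            exact lintegral_congr fun x =>
              lintegral_const_mul' _ _ ENNReal.ofReal_ne_top
        _ ≤ ENNReal.ofReal Λ * (M * ENNReal.ofReal (R ^ ((n : ℝ) - α))) :=
            mul_le_mul_right hJ _
        _ = ENNReal.ofReal Λ * M * ENNReal.ofReal (R ^ ((n : ℝ) - α)) :=
            (mul_assoc _ _ _).symm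
    have hCb : ENNReal.ofReal Λ * M ≤ ENNReal.ofReal C := by
      calc ENNReal.ofReal Λ * M
          = ENNReal.ofReal ((ENNReal.ofReal Λ * M).toReal) :=
            (ENNReal.ofReal_toReal hΛMne).symm
        _ ≤ ENNReal.ofReal C := ENNReal.ofReal_le_ofReal (by rw [hC]; linarith)
    have final : ENNReal.ofReal |fracPairing n α u χ| ≤
        ENNReal.ofReal (C * R ^ ((n : ℝ) - α)) := by
      refine key.trans ?_
      rw [ENNReal.ofReal_mul hC0.le]
      exact mul_le_mul_left hCb _
    exact (ENNReal.ofReal_le_ofReal_iff (by positivity)).1 final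
end

section
/- Let N ≥ 1 be an integer and α ∈ (0,1). There exists a constant C > 0, depending only on N and α, such that for every R > 0 and every measurable set E ⊆ ℝ^N that is α-minimal in the ball B_R ⊆ ℝ^N, one has Per_α(E, B_R) ≤ C R^{N−α}. -/
open MeasureTheory Filter Metric Topology
open scoped ENNReal RealInnerProductSpace symmDiff

section PerimeterEstimateAux

open Set

variable {N : ℕ} {α : ℝ}

private lemma meas_ker (q : ℝ) :
    Measurable fun z : EuclideanSpace ℝ (Fin N) => ENNReal.ofReal (‖z‖ ^ q) :=
  (measurable_norm.pow measurable_const).ennreal_ofReal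

private lemma lint_scale {R : ℝ} (hR : 0 < R) {f : EuclideanSpace ℝ (Fin N) → ℝ≥0∞}
    (hf : Measurable f) :
    ∫⁻ x, f x = ENNReal.ofReal (R ^ N) * ∫⁻ x, f (R • x) := by
  have hRn : R ≠ 0 := hR.ne'
  have h1 : ∫⁻ x, f (R • x) = ∫⁻ x, f x ∂(Measure.map (R • ·) volume) :=
    (lintegral_map hf (measurable_id.const_smul R)).symm
  rw [h1, Measure.map_addHaar_smul volume hRn, lintegral_smul_measure,
    finrank_euclideanSpace_fin, abs_of_pos (inv_pos.2 (pow_pos hR N)), smul_eq_mul, ← mul_assoc,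
    ← ENNReal.ofReal_mul (pow_pos hR N).le, mul_inv_cancel₀ (pow_pos hR N).ne',
    ENNReal.ofReal_one, one_mul]


private lemma small_ball (hN : 1 ≤ N) {p : ℝ} (hp : -(N : ℝ) < p) (hp0 : p ≤ 0) :
    ∫⁻ z in ball (0 : EuclideanSpace ℝ (Fin N)) 1, ENNReal.ofReal (‖z‖ ^ p) < ⊤ := by
  classical
  haveI : Nontrivial (EuclideanSpace ℝ (Fin N)) :=
    ⟨EuclideanSpace.single ⟨0, hN⟩ (1 : ℝ), 0, by
      intro h
      have := congrArg (fun v : EuclideanSpace ℝ (Fin N) => v ⟨0, hN⟩) h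
      simp [EuclideanSpace.single] at this⟩
  set t : ℝ := 2⁻¹ with ht_def
  have ht : (0 : ℝ) < t := by norm_num
  have ht1 : t < 1 := by norm_num
  set A : ℕ → Set (EuclideanSpace ℝ (Fin N)) :=
    fun k => {z | t ^ (k + 1) ≤ ‖z‖ ∧ ‖z‖ < t ^ k} with hA_def
  have hcover : ball (0 : EuclideanSpace ℝ (Fin N)) 1 ⊆ {0} ∪ ⋃ k, A k := by
    intro z hz
    rcases eq_or_ne z 0 with rfl | hz0
    · exact Or.inl rfl
    · refine Or.inr ?_
      have hzpos : 0 < ‖z‖ := norm_pos_iff.2 hz0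
      have hz1 : ‖z‖ < 1 := by simpa using mem_ball_zero_iff.1 hz
      have hex : ∃ n : ℕ, t ^ n ≤ ‖z‖ := by
        obtain ⟨n, hn⟩ := exists_pow_lt_of_lt_one hzpos ht1
        exact ⟨n, hn.le⟩
      set k0 := Nat.find hex with hk0
      have hk0pos : k0 ≠ 0 := by
        intro h
        have h2 := Nat.find_spec hex
        rw [← hk0, h, pow_zero] at h2
        linarith
      obtain ⟨m, hm⟩ : ∃ m, k0 = m + 1 := ⟨k0 - 1, (Nat.succ_pred_eq_of_pos (Nat.pos_of_ne_zero hk0pos)).symm⟩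
      refine mem_iUnion.2 ⟨m, ?_, ?_⟩
      · rw [← hm]; exact Nat.find_spec hex
      · by_contra hcon
        push_neg at hcon
        exact Nat.find_min hex (by omega : m < Nat.find hex) hcon
  set B1 := ball (0 : EuclideanSpace ℝ (Fin N)) 1 with hB1
  set q : ℝ≥0∞ := ENNReal.ofReal (t ^ (p + (N : ℝ))) with hq_def
  have hkey : ∀ k : ℕ, (t ^ (k + 1) : ℝ) ^ p * (t ^ k : ℝ) ^ (N : ℕ)
      = t ^ p * ((t ^ (p + (N : ℝ))) ^ k : ℝ) := by
    intro k
    have e1 : (t ^ (k + 1) : ℝ) ^ p = t ^ (((k : ℝ) + 1) * p) := by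
      rw [← Real.rpow_natCast t (k + 1), ← Real.rpow_mul ht.le]
      congr 1
      push_cast
      ring
    have e2 : (t ^ k : ℝ) ^ (N : ℕ) = t ^ ((k : ℝ) * N) := by
      rw [← Real.rpow_natCast (t ^ k) N, ← Real.rpow_natCast t k, ← Real.rpow_mul ht.le]
    have e3 : ((t ^ (p + (N : ℝ))) ^ k : ℝ) = t ^ ((p + (N : ℝ)) * k) := by
      rw [← Real.rpow_natCast (t ^ (p + (N : ℝ))) k, ← Real.rpow_mul ht.le]
    rw [e1, e2, e3, ← Real.rpow_add ht, ← Real.rpow_add ht]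
    congr 1
    ring
  have termbound : ∀ k : ℕ, (∫⁻ z in A k, ENNReal.ofReal (‖z‖ ^ p))
      ≤ ENNReal.ofReal ((t ^ (k + 1) : ℝ) ^ p * (t ^ k : ℝ) ^ (N : ℕ)) * volume B1 := by
    intro k
    calc (∫⁻ z in A k, ENNReal.ofReal (‖z‖ ^ p))
        ≤ ∫⁻ _ in A k, ENNReal.ofReal ((t ^ (k + 1) : ℝ) ^ p) :=
          setLIntegral_mono measurable_const fun z hz => ENNReal.ofReal_le_ofReal
            (Real.rpow_le_rpow_of_nonpos (pow_pos ht _) hz.1 hp0)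
      _ = ENNReal.ofReal ((t ^ (k + 1) : ℝ) ^ p) * volume (A k) := setLIntegral_const _ _
      _ ≤ ENNReal.ofReal ((t ^ (k + 1) : ℝ) ^ p) *
            (ENNReal.ofReal ((t ^ k : ℝ) ^ (N : ℕ)) * volume B1) := by
          refine mul_le_mul_right ?_ _
          have hsub : A k ⊆ ball (0 : EuclideanSpace ℝ (Fin N)) (t ^ k) :=
            fun z hz => mem_ball_zero_iff.2 hz.2
          refine (measure_mono hsub).trans (le_of_eq ?_)
          rw [Measure.addHaar_ball volume 0 (pow_nonneg ht.le k), finrank_euclideanSpace_fin]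
      _ = ENNReal.ofReal ((t ^ (k + 1) : ℝ) ^ p * (t ^ k : ℝ) ^ (N : ℕ)) * volume B1 := by
          rw [← mul_assoc, ← ENNReal.ofReal_mul (Real.rpow_nonneg (pow_nonneg ht.le _) p)]
  have hterm : ∀ k : ℕ, ENNReal.ofReal ((t ^ (k + 1) : ℝ) ^ p * (t ^ k : ℝ) ^ (N : ℕ)) * volume B1
      = (ENNReal.ofReal (t ^ p) * volume B1) * q ^ k := by
    intro k
    rw [hkey k, ENNReal.ofReal_mul (Real.rpow_nonneg ht.le p),
      ENNReal.ofReal_pow (Real.rpow_nonneg ht.le _)]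
    ring
  have hq1 : q < 1 := by
    rw [hq_def, ENNReal.ofReal_lt_one]
    exact Real.rpow_lt_one ht.le ht1 (by linarith)
  calc (∫⁻ z in B1, ENNReal.ofReal (‖z‖ ^ p))
      ≤ ∫⁻ z in ({0} ∪ ⋃ k, A k), ENNReal.ofReal (‖z‖ ^ p) := lintegral_mono_set hcover
    _ ≤ (∫⁻ z in ({0} : Set (EuclideanSpace ℝ (Fin N))), ENNReal.ofReal (‖z‖ ^ p))
          + ∫⁻ z in ⋃ k, A k, ENNReal.ofReal (‖z‖ ^ p) := lintegral_union_le _ _ _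
    _ ≤ 0 + ∑' k, ∫⁻ z in A k, ENNReal.ofReal (‖z‖ ^ p) :=
          add_le_add (le_of_eq (setLIntegral_measure_zero _ _ (measure_singleton 0)))
            (lintegral_iUnion_le _ _)
    _ ≤ ∑' k, ENNReal.ofReal ((t ^ (k + 1) : ℝ) ^ p * (t ^ k : ℝ) ^ (N : ℕ)) * volume B1 := by
          rw [zero_add]
          exact ENNReal.tsum_le_tsum termbound
    _ = (ENNReal.ofReal (t ^ p) * volume B1) * ∑' k : ℕ, q ^ k := by
          simp_rw [hterm]
          exact ENNReal.tsum_mul_left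
    _ < ⊤ := by
          rw [ENNReal.tsum_geometric]
          exact ENNReal.mul_lt_top (ENNReal.mul_lt_top ENNReal.ofReal_lt_top measure_ball_lt_top)
            (ENNReal.inv_lt_top.2 (tsub_pos_iff_lt.2 hq1))


private lemma tail_finite (hα : 0 < α) :
    ∫⁻ z in (ball (0 : EuclideanSpace ℝ (Fin N)) 1)ᶜ,
      ENNReal.ofReal (‖z‖ ^ (-((N : ℝ) + α))) < ⊤ := by
  set s : ℝ := (N : ℝ) + α with hs_def
  have hs : 0 < s := by positivity
  have hpt : ∀ z ∈ (ball (0 : EuclideanSpace ℝ (Fin N)) 1)ᶜ,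
      ENNReal.ofReal (‖z‖ ^ (-s)) ≤
        ENNReal.ofReal ((2 : ℝ) ^ s) * ENNReal.ofReal ((1 + ‖z‖) ^ (-s)) := by
    intro z hz
    have hz1 : (1 : ℝ) ≤ ‖z‖ := by
      have := mem_ball_zero_iff.not.1 hz
      linarith [not_lt.1 this]
    have hzpos : (0 : ℝ) < ‖z‖ := by linarith
    rw [← ENNReal.ofReal_mul (by positivity)]
    refine ENNReal.ofReal_le_ofReal ?_
    have h1 : (1 + ‖z‖) ≤ 2 * ‖z‖ := by linarith
    have h2 : (2 * ‖z‖ : ℝ) ^ (-s) ≤ (1 + ‖z‖) ^ (-s) :=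
      Real.rpow_le_rpow_of_nonpos (by positivity) h1 (by linarith)
    have h3 : (2 * ‖z‖ : ℝ) ^ (-s) = (2 : ℝ) ^ (-s) * ‖z‖ ^ (-s) :=
      Real.mul_rpow (by norm_num) hzpos.le
    calc ‖z‖ ^ (-s) = (2 : ℝ) ^ s * ((2 : ℝ) ^ (-s) * ‖z‖ ^ (-s)) := by
          rw [← mul_assoc, ← Real.rpow_add (by norm_num : (0:ℝ) < 2), add_neg_cancel,
            Real.rpow_zero, one_mul]
      _ = (2 : ℝ) ^ s * (2 * ‖z‖ : ℝ) ^ (-s) := by rw [h3]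
      _ ≤ (2 : ℝ) ^ s * (1 + ‖z‖) ^ (-s) := by
          exact mul_le_mul_of_nonneg_left h2 (by positivity)
  calc (∫⁻ z in (ball (0 : EuclideanSpace ℝ (Fin N)) 1)ᶜ, ENNReal.ofReal (‖z‖ ^ (-s)))
      ≤ ∫⁻ z in (ball (0 : EuclideanSpace ℝ (Fin N)) 1)ᶜ,
          ENNReal.ofReal ((2 : ℝ) ^ s) * ENNReal.ofReal ((1 + ‖z‖) ^ (-s)) :=
        setLIntegral_mono (measurable_const.mul
          ((measurable_const.add measurable_norm).pow measurable_const).ennreal_ofReal) hpt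
    _ ≤ ∫⁻ z, ENNReal.ofReal ((2 : ℝ) ^ s) * ENNReal.ofReal ((1 + ‖z‖) ^ (-s)) :=
        setLIntegral_le_lintegral _ _
    _ = ENNReal.ofReal ((2 : ℝ) ^ s) * ∫⁻ z, ENNReal.ofReal ((1 + ‖z‖) ^ (-s)) :=
        lintegral_const_mul' _ _ ENNReal.ofReal_ne_top
    _ < ⊤ := by
        refine ENNReal.mul_lt_top ENNReal.ofReal_lt_top ?_
        refine finite_integral_one_add_norm (μ := (volume : Measure (EuclideanSpace ℝ (Fin N))))
          (r := s) ?_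
        rw [finrank_euclideanSpace_fin, hs_def]
        linarith


private lemma vol_shell (hN : 1 ≤ N) {z : EuclideanSpace ℝ (Fin N)} (hz : ‖z‖ ≤ 1) :
    volume (ball (0 : EuclideanSpace ℝ (Fin N)) 1 ∩
        (fun x => x + z) ⁻¹' (ball (0 : EuclideanSpace ℝ (Fin N)) 1)ᶜ)
      ≤ ENNReal.ofReal ((N : ℝ) * ‖z‖) * volume (ball (0 : EuclideanSpace ℝ (Fin N)) 1) := by
  haveI : Nontrivial (EuclideanSpace ℝ (Fin N)) :=
    ⟨EuclideanSpace.single ⟨0, hN⟩ (1 : ℝ), 0, by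
      intro h
      have := congrArg (fun v : EuclideanSpace ℝ (Fin N) => v ⟨0, hN⟩) h
      simp [EuclideanSpace.single] at this⟩
  set t : ℝ := ‖z‖ with ht_def
  have ht0 : 0 ≤ t := norm_nonneg z
  set B1 := ball (0 : EuclideanSpace ℝ (Fin N)) 1 with hB1
  have hsub : B1 ∩ (fun x => x + z) ⁻¹' B1ᶜ ⊆ B1 \ ball 0 (1 - t) := by
    rintro x ⟨hx1, hx2⟩
    refine ⟨hx1, fun hx3 => ?_⟩
    have h1 : ¬ ‖x + z‖ < 1 := fun h => hx2 (mem_ball_zero_iff.2 h)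
    have h2 : ‖x‖ < 1 - t := mem_ball_zero_iff.1 hx3
    have h3 : ‖x + z‖ ≤ ‖x‖ + ‖z‖ := norm_add_le x z
    push_neg at h1
    linarith
  refine (measure_mono hsub).trans ?_
  have hdiff : volume (B1 \ ball 0 (1 - t)) = volume B1 - volume (ball (0:EuclideanSpace ℝ (Fin N)) (1 - t)) :=
    measure_diff (ball_subset_ball (by linarith)) measurableSet_ball.nullMeasurableSet
      measure_ball_lt_top.ne
  rw [hdiff]
  rw [tsub_le_iff_right]
  have hball : volume (ball (0:EuclideanSpace ℝ (Fin N)) (1 - t))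
      = ENNReal.ofReal ((1 - t) ^ N) * volume B1 := by
    rw [Measure.addHaar_ball volume 0 (by linarith : (0:ℝ) ≤ 1 - t), finrank_euclideanSpace_fin]
  have hbern : (1 : ℝ) ≤ (N : ℝ) * t + (1 - t) ^ N := by
    have hb := one_add_mul_le_pow (show (-2 : ℝ) ≤ -t by linarith) N
    have he : ((1 : ℝ) + -t) = 1 - t := by ring
    rw [he] at hb
    nlinarith
  calc volume B1 = ENNReal.ofReal (1 : ℝ) * volume B1 := by rw [ENNReal.ofReal_one, one_mul]
    _ ≤ ENNReal.ofReal ((N : ℝ) * t + (1 - t) ^ N) * volume B1 :=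
        mul_le_mul_left (ENNReal.ofReal_le_ofReal hbern) _
    _ = (ENNReal.ofReal ((N : ℝ) * t) + ENNReal.ofReal ((1 - t) ^ N)) * volume B1 := by
        rw [ENNReal.ofReal_add (by positivity) (pow_nonneg (by linarith : (0:ℝ) ≤ 1 - t) N)]
    _ = ENNReal.ofReal ((N : ℝ) * t) * volume B1 + volume (ball (0:EuclideanSpace ℝ (Fin N)) (1 - t)) := by
        rw [add_mul, hball]


private lemma I_one_lt_top (hN : 1 ≤ N) (hα : α ∈ Set.Ioo (0 : ℝ) 1) :
    (∫⁻ x in ball (0 : EuclideanSpace ℝ (Fin N)) 1,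
      ∫⁻ y in (ball (0 : EuclideanSpace ℝ (Fin N)) 1)ᶜ, fracKer N α x y) < ⊤ := by
  set V := EuclideanSpace ℝ (Fin N)
  set B1 : Set V := ball (0 : V) 1 with hB1
  set K : V → ℝ≥0∞ := fun z => ENNReal.ofReal (‖z‖ ^ (-((N : ℝ) + α))) with hK
  set S : V → Set V := fun z => B1 ∩ (fun x => x + z) ⁻¹' B1ᶜ with hS
  have hSmeas : ∀ z, MeasurableSet (S z) :=
    fun z => measurableSet_ball.inter ((measurableSet_ball.compl).preimage
      (measurable_id.add_const z))
  -- Step 1: translation in the inner integral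
  have step1 : ∀ x : V, (∫⁻ y in B1ᶜ, fracKer N α x y)
      = ∫⁻ z, B1ᶜ.indicator (fun _ => (1 : ℝ≥0∞)) (x + z) * K z := by
    intro x
    rw [← lintegral_indicator measurableSet_ball.compl _,
      ← lintegral_add_left_eq_self (fun y => B1ᶜ.indicator (fun y => fracKer N α x y) y) x]
    refine lintegral_congr fun z => ?_
    by_cases hz : x + z ∈ B1ᶜ
    · rw [Set.indicator_of_mem hz, Set.indicator_of_mem hz, one_mul]
      have hxz : x - (x + z) = -z := by abel
      rw [fracKer, hxz, norm_neg]
    · rw [Set.indicator_of_notMem hz, Set.indicator_of_notMem hz, zero_mul]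
  -- Step 2: write as a double integral of indicators
  have step2 : (∫⁻ x in B1, ∫⁻ y in B1ᶜ, fracKer N α x y)
      = ∫⁻ x, ∫⁻ z, B1.indicator (fun _ => (1 : ℝ≥0∞)) x *
          (B1ᶜ.indicator (fun _ => (1 : ℝ≥0∞)) (x + z) * K z) := by
    rw [← lintegral_indicator measurableSet_ball _]
    refine lintegral_congr fun x => ?_
    by_cases hx : x ∈ B1
    · rw [Set.indicator_of_mem hx, step1 x]
      refine lintegral_congr fun z => ?_
      rw [Set.indicator_of_mem hx, one_mul]
    · rw [Set.indicator_of_notMem hx, Set.indicator_of_notMem hx]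
      simp
  -- Step 3: swap the integrals
  have hmeas : Measurable (Function.uncurry fun (x z : V) =>
      B1.indicator (fun _ => (1 : ℝ≥0∞)) x *
        (B1ᶜ.indicator (fun _ => (1 : ℝ≥0∞)) (x + z) * K z)) := by
    refine Measurable.mul ?_ (Measurable.mul ?_ ?_)
    · exact (measurable_const.indicator measurableSet_ball).comp measurable_fst
    · exact (measurable_const.indicator measurableSet_ball.compl).comp
        (measurable_fst.add measurable_snd)
    · exact (meas_ker _).comp measurable_snd
  have step3 : (∫⁻ x in B1, ∫⁻ y in B1ᶜ, fracKer N α x y)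
      = ∫⁻ z, K z * volume (S z) := by
    rw [step2, lintegral_lintegral_swap hmeas.aemeasurable]
    refine lintegral_congr fun z => ?_
    have hpt : ∀ x : V, B1.indicator (fun _ => (1 : ℝ≥0∞)) x *
        (B1ᶜ.indicator (fun _ => (1 : ℝ≥0∞)) (x + z) * K z)
        = (S z).indicator (fun _ => K z) x := by
      intro x
      by_cases hx : x ∈ B1
      · by_cases hxz : x + z ∈ B1ᶜ
        · have hxS : x ∈ S z := ⟨hx, hxz⟩
          rw [Set.indicator_of_mem hx, Set.indicator_of_mem hxz, Set.indicator_of_mem hxS,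
            one_mul, one_mul]
        · have hxS : x ∉ S z := fun h => hxz h.2
          rw [Set.indicator_of_notMem hxz, Set.indicator_of_notMem hxS, zero_mul, mul_zero]
      · have hxS : x ∉ S z := fun h => hx h.1
        rw [Set.indicator_of_notMem hx, Set.indicator_of_notMem hxS, zero_mul]
    rw [lintegral_congr hpt, lintegral_indicator (hSmeas z) _, setLIntegral_const]
  rw [step3, ← lintegral_add_compl (fun z => K z * volume (S z)) measurableSet_ball]
  have hs1 : (1 : ℝ) < (N : ℝ) + α := by
    have : (1 : ℝ) ≤ (N : ℝ) := by exact_mod_cast hN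
    linarith [hα.1]
  refine ENNReal.add_lt_top.2 ⟨?_, ?_⟩
  · -- over B1 : linear volume bound
    have hker_mul : ∀ z : V, K z * ENNReal.ofReal ‖z‖
        = ENNReal.ofReal (‖z‖ ^ (1 - ((N : ℝ) + α))) := by
      intro z
      rcases eq_or_ne z 0 with rfl | hz0
      · rw [hK]
        simp only [norm_zero]
        rw [Real.zero_rpow (by intro h; simp at h; linarith : -((N : ℝ) + α) ≠ 0),
          Real.zero_rpow (by intro h; linarith [h] : 1 - ((N : ℝ) + α) ≠ 0)]
        simp
      · have hzpos : (0 : ℝ) < ‖z‖ := norm_pos_iff.2 hz0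
        rw [hK, ← ENNReal.ofReal_mul (Real.rpow_nonneg hzpos.le _)]
        congr 1
        have he : ‖z‖ ^ (1 - ((N : ℝ) + α)) = ‖z‖ ^ (-((N : ℝ) + α)) * ‖z‖ := by
          rw [show (1 - ((N : ℝ) + α)) = -((N : ℝ) + α) + 1 by ring, Real.rpow_add hzpos,
            Real.rpow_one]
        exact he.symm
    calc (∫⁻ z in B1, K z * volume (S z))
        ≤ ∫⁻ z in B1, (ENNReal.ofReal (N : ℝ) * volume B1) *
            ENNReal.ofReal (‖z‖ ^ (1 - ((N : ℝ) + α))) := by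
          refine setLIntegral_mono (measurable_const.mul (meas_ker _)) fun z hz => ?_
          have hz1 : ‖z‖ ≤ 1 := (mem_ball_zero_iff.1 hz).le
          calc K z * volume (S z)
              ≤ K z * (ENNReal.ofReal ((N : ℝ) * ‖z‖) * volume B1) :=
                mul_le_mul_right (vol_shell hN hz1) _
            _ = (ENNReal.ofReal (N : ℝ) * volume B1) * (K z * ENNReal.ofReal ‖z‖) := by
                rw [ENNReal.ofReal_mul (Nat.cast_nonneg N)]
                ring
            _ = (ENNReal.ofReal (N : ℝ) * volume B1) *
                ENNReal.ofReal (‖z‖ ^ (1 - ((N : ℝ) + α))) := by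
                rw [hker_mul z]
      _ = (ENNReal.ofReal (N : ℝ) * volume B1) *
            ∫⁻ z in B1, ENNReal.ofReal (‖z‖ ^ (1 - ((N : ℝ) + α))) :=
          lintegral_const_mul' _ _ (ENNReal.mul_ne_top ENNReal.ofReal_ne_top
            measure_ball_lt_top.ne)
      _ < ⊤ := ENNReal.mul_lt_top
          (ENNReal.mul_lt_top ENNReal.ofReal_lt_top measure_ball_lt_top)
          (small_ball hN (by linarith [hα.2] : -(N : ℝ) < 1 - ((N : ℝ) + α))
            (by linarith : (1 : ℝ) - ((N : ℝ) + α) ≤ 0))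
  · -- over B1ᶜ : crude bound
    calc (∫⁻ z in B1ᶜ, K z * volume (S z))
        ≤ ∫⁻ z in B1ᶜ, K z * volume B1 :=
          setLIntegral_mono ((meas_ker _).mul_const _) fun z _ =>
            mul_le_mul_right (measure_mono inter_subset_left) _
      _ = (∫⁻ z in B1ᶜ, K z) * volume B1 := lintegral_mul_const' _ _ measure_ball_lt_top.ne
      _ < ⊤ := ENNReal.mul_lt_top (tail_finite hα.1) measure_ball_lt_top


private lemma hker_unc :
    Measurable fun p : EuclideanSpace ℝ (Fin N) × EuclideanSpace ℝ (Fin N) =>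
      fracKer N α p.1 p.2 :=
  ((measurable_fst.sub measurable_snd).norm.pow measurable_const).ennreal_ofReal

private lemma swap_int (A B : Set (EuclideanSpace ℝ (Fin N))) :
    ∫⁻ x in A, ∫⁻ y in B, fracKer N α x y = ∫⁻ y in B, ∫⁻ x in A, fracKer N α x y :=
  lintegral_lintegral_swap (hker_unc (N := N) (α := α)).aemeasurable

private lemma ker_symm (x y : EuclideanSpace ℝ (Fin N)) :
    fracKer N α x y = fracKer N α y x := by
  rw [fracKer, fracKer, norm_sub_rev]

private lemma I_scale {R : ℝ} (hR : 0 < R) :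
    (∫⁻ x in ball (0 : EuclideanSpace ℝ (Fin N)) R,
        ∫⁻ y in (ball (0 : EuclideanSpace ℝ (Fin N)) R)ᶜ, fracKer N α x y)
      = ENNReal.ofReal (R ^ ((N : ℝ) - α)) *
        ∫⁻ x in ball (0 : EuclideanSpace ℝ (Fin N)) 1,
          ∫⁻ y in (ball (0 : EuclideanSpace ℝ (Fin N)) 1)ᶜ, fracKer N α x y := by
  set V := EuclideanSpace ℝ (Fin N)
  have hmem : ∀ x : V, R • x ∈ ball (0 : V) R ↔ x ∈ ball (0 : V) 1 := by
    intro x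
    rw [mem_ball_zero_iff, mem_ball_zero_iff, norm_smul, Real.norm_eq_abs, abs_of_pos hR]
    exact mul_lt_iff_lt_one_right hR
  have hFmeas : Measurable fun x : V => ∫⁻ y in (ball (0 : V) R)ᶜ, fracKer N α x y :=
    Measurable.lintegral_prod_right hker_unc
  have inner_eq : ∀ x : V, (∫⁻ y in (ball (0 : V) R)ᶜ, fracKer N α (R • x) y)
      = (ENNReal.ofReal (R ^ N) * ENNReal.ofReal (R ^ (-((N : ℝ) + α)))) *
        ∫⁻ y in (ball (0 : V) 1)ᶜ, fracKer N α x y := by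
    intro x
    have hgmeas : Measurable fun y : V => fracKer N α (R • x) y :=
      ((measurable_const.sub measurable_id).norm.pow measurable_const).ennreal_ofReal
    calc (∫⁻ y in (ball (0 : V) R)ᶜ, fracKer N α (R • x) y)
        = ∫⁻ y, ((ball (0 : V) R)ᶜ).indicator (fun y => fracKer N α (R • x) y) y :=
          (lintegral_indicator measurableSet_ball.compl _).symm
      _ = ENNReal.ofReal (R ^ N) *
            ∫⁻ y, ((ball (0 : V) R)ᶜ).indicator (fun y => fracKer N α (R • x) y) (R • y) :=
          lint_scale hR (hgmeas.indicator measurableSet_ball.compl)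
      _ = ENNReal.ofReal (R ^ N) * ∫⁻ y in (ball (0 : V) 1)ᶜ, fracKer N α (R • x) (R • y) := by
          congr 1
          rw [← lintegral_indicator measurableSet_ball.compl _]
          refine lintegral_congr fun y => ?_
          by_cases hy : y ∈ (ball (0 : V) 1)ᶜ
          · have hy2 : R • y ∈ (ball (0 : V) R)ᶜ := fun h => hy ((hmem y).1 h)
            rw [Set.indicator_of_mem hy2, Set.indicator_of_mem hy]
          · have hy' : y ∈ ball (0 : V) 1 := not_not.1 hy
            rw [Set.indicator_of_notMem (by simpa using (hmem y).2 hy'),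
              Set.indicator_of_notMem hy]
      _ = ENNReal.ofReal (R ^ N) * ∫⁻ y in (ball (0 : V) 1)ᶜ,
            ENNReal.ofReal (R ^ (-((N : ℝ) + α))) * fracKer N α x y := by
          congr 1
          refine lintegral_congr fun y => ?_
          rw [fracKer, fracKer, ← smul_sub, norm_smul, Real.norm_eq_abs, abs_of_pos hR,
            Real.mul_rpow hR.le (norm_nonneg _),
            ENNReal.ofReal_mul (Real.rpow_nonneg hR.le _)]
      _ = (ENNReal.ofReal (R ^ N) * ENNReal.ofReal (R ^ (-((N : ℝ) + α)))) *
            ∫⁻ y in (ball (0 : V) 1)ᶜ, fracKer N α x y := by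
          rw [lintegral_const_mul' _ _ ENNReal.ofReal_ne_top, mul_assoc]
  calc (∫⁻ x in ball (0 : V) R, ∫⁻ y in (ball (0 : V) R)ᶜ, fracKer N α x y)
      = ∫⁻ x, (ball (0 : V) R).indicator
          (fun x => ∫⁻ y in (ball (0 : V) R)ᶜ, fracKer N α x y) x :=
        (lintegral_indicator measurableSet_ball _).symm
    _ = ENNReal.ofReal (R ^ N) * ∫⁻ x, (ball (0 : V) R).indicator
          (fun x => ∫⁻ y in (ball (0 : V) R)ᶜ, fracKer N α x y) (R • x) :=
        lint_scale hR (hFmeas.indicator measurableSet_ball)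
    _ = ENNReal.ofReal (R ^ N) * ∫⁻ x in ball (0 : V) 1,
          ∫⁻ y in (ball (0 : V) R)ᶜ, fracKer N α (R • x) y := by
        congr 1
        rw [← lintegral_indicator measurableSet_ball _]
        refine lintegral_congr fun x => ?_
        by_cases hx : x ∈ ball (0 : V) 1
        · rw [Set.indicator_of_mem ((hmem x).2 hx), Set.indicator_of_mem hx]
        · rw [Set.indicator_of_notMem (fun h => hx ((hmem x).1 h)),
            Set.indicator_of_notMem hx]
    _ = ENNReal.ofReal (R ^ N) * ((ENNReal.ofReal (R ^ N) *
          ENNReal.ofReal (R ^ (-((N : ℝ) + α)))) *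
          ∫⁻ x in ball (0 : V) 1, ∫⁻ y in (ball (0 : V) 1)ᶜ, fracKer N α x y) := by
        congr 1
        rw [← lintegral_const_mul' _ _ (ENNReal.mul_ne_top ENNReal.ofReal_ne_top
          ENNReal.ofReal_ne_top)]
        exact lintegral_congr fun x => inner_eq x
    _ = ENNReal.ofReal (R ^ ((N : ℝ) - α)) *
          ∫⁻ x in ball (0 : V) 1, ∫⁻ y in (ball (0 : V) 1)ᶜ, fracKer N α x y := by
        rw [← mul_assoc]
        congr 1
        rw [← ENNReal.ofReal_mul (pow_nonneg hR.le N),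
          ← ENNReal.ofReal_mul (by positivity)]
        congr 1
        rw [← Real.rpow_natCast R N, ← Real.rpow_add hR, ← Real.rpow_add hR]
        congr 1
        ring

private lemma compare {R : ℝ} {E : Set (EuclideanSpace ℝ (Fin N))}
    (hmin : IsMinimalIn N α E (ball (0 : EuclideanSpace ℝ (Fin N)) R)) :
    fracPer N α E (ball (0 : EuclideanSpace ℝ (Fin N)) R)
      ≤ ∫⁻ x in ball (0 : EuclideanSpace ℝ (Fin N)) R,
          ∫⁻ y in (ball (0 : EuclideanSpace ℝ (Fin N)) R)ᶜ, fracKer N α x y := by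
  set Ω : Set (EuclideanSpace ℝ (Fin N)) := ball (0 : EuclideanSpace ℝ (Fin N)) R with hΩ
  obtain ⟨hE, -, hcomp⟩ := hmin
  have h2 : (E \ Ω) \ Ω = E \ Ω := by rw [diff_diff, union_self]
  have hΩm : MeasurableSet Ω := hΩ ▸ measurableSet_ball
  have h := hcomp (E \ Ω) (hE.diff hΩm) h2
  refine h.trans ?_
  have h1 : Ω ∩ (E \ Ω) = ∅ := inter_diff_self _ _
  have h3 : Ω \ (E \ Ω) = Ω := by
    rw [diff_diff_right, inter_self, union_eq_self_of_subset_left diff_subset]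
  rw [fracPer, h1, h2, h3]
  rw [Measure.restrict_empty]
  simp only [lintegral_zero_measure, zero_add]
  calc (∫⁻ x in E \ Ω, ∫⁻ y in Ω, fracKer N α x y)
      ≤ ∫⁻ x in Ωᶜ, ∫⁻ y in Ω, fracKer N α x y :=
        lintegral_mono_set (diff_subset_compl E Ω)
    _ = ∫⁻ y in Ω, ∫⁻ x in Ωᶜ, fracKer N α x y := swap_int _ _
    _ = ∫⁻ x in Ω, ∫⁻ y in Ωᶜ, fracKer N α x y := by
        refine lintegral_congr fun y => lintegral_congr fun x => ?_
        exact ker_symm x y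


end PerimeterEstimateAux


/-- There is `C = C(N, α) > 0` such that every set that is `α`-minimal in the ball
`B_R ⊆ ℝᴺ` satisfies `Per_α(E, B_R) ≤ C R^{N-α}`. -/

theorem perimeter_estimate (N : ℕ) (hN : 1 ≤ N) (α : ℝ) (hα : α ∈ Set.Ioo (0 : ℝ) 1) :
    ∃ C : ℝ, 0 < C ∧
      ∀ R : ℝ, 0 < R → ∀ E : Set (EuclideanSpace ℝ (Fin N)),
        IsMinimalIn N α E (ball (0 : EuclideanSpace ℝ (Fin N)) R) →
          fracPer N α E (ball (0 : EuclideanSpace ℝ (Fin N)) R) ≤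
            ENNReal.ofReal (C * R ^ ((N : ℝ) - α)) := by
  set I1 := ∫⁻ x in ball (0 : EuclideanSpace ℝ (Fin N)) 1,
    ∫⁻ y in (ball (0 : EuclideanSpace ℝ (Fin N)) 1)ᶜ, fracKer N α x y with hI1
  have hfin : I1 < ⊤ := I_one_lt_top hN hα
  refine ⟨I1.toReal + 1, add_pos_of_nonneg_of_pos ENNReal.toReal_nonneg one_pos, ?_⟩
  intro R hR E hmin
  calc fracPer N α E (ball (0 : EuclideanSpace ℝ (Fin N)) R)
      ≤ ∫⁻ x in ball (0 : EuclideanSpace ℝ (Fin N)) R,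
          ∫⁻ y in (ball (0 : EuclideanSpace ℝ (Fin N)) R)ᶜ, fracKer N α x y := compare hmin
    _ = ENNReal.ofReal (R ^ ((N : ℝ) - α)) * I1 := I_scale hR
    _ ≤ ENNReal.ofReal (R ^ ((N : ℝ) - α)) * ENNReal.ofReal (I1.toReal + 1) := by
        refine mul_le_mul_right ?_ _
        refine le_trans (le_of_eq (ENNReal.ofReal_toReal hfin.ne).symm) ?_
        exact ENNReal.ofReal_le_ofReal (by linarith [ENNReal.toReal_nonneg (a := I1)])
    _ = ENNReal.ofReal ((I1.toReal + 1) * R ^ ((N : ℝ) - α)) := by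
        rw [← ENNReal.ofReal_mul (Real.rpow_nonneg hR.le _), mul_comm]
end
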